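/- arXiv:2206.13141 — 4 statements merged into one kernel-verified Lean document; each statement's English description precedes it below -/
import Mathlib

section
/- Let a < b be real numbers and let ε satisfy 0 < 2ε < b - a. Define y(x) = sqrt((x - a)(b - x)) on (a, b), and set x₋ = ((a + b) - sqrt((b - a)^2 - 4ε^2))/2 and x₊ = ((a + b) + sqrt((b - a)^2 - 4ε^2))/2. Then the integral of (1 / y(x)) · sqrt(1 + (y'(x))^2) over x from x₋ to x₊ equals 2 · log((b - a + sqrt((b - a)^2 - 4ε^2)) / (2ε)). -/
/-!
The graph of `y = √((x - a)(b - x))` is the half-circle over `[a, b]`. Since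
`4 (x - a)(b - x) + (a + b - 2x)² = (b - a)²`, the hyperbolic line element along it is
`(b - a) / (2 y²) dx = ½ ((x - a)⁻¹ + (b - x)⁻¹) dx`, with primitive `½ log ((x - a) / (b - x))`.
At the truncation points `x₊ - a = b - x₋` and `b - x₊ = x₋ - a`, and their product is `ε²`,
so the two logarithms combine into `log ((x₊ - a)² / ε²)`.
-/

open Real Set intervalIntegral

theorem integral_inv_sub_add_inv_sub {a b u v : ℝ} (hu : u ∈ Ioo a b) (hv : v ∈ Ioo a b) :
    ∫ x in u..v, ((x - a)⁻¹ + (b - x)⁻¹)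
      = log ((v - a) / (u - a)) + log ((b - u) / (b - v)) := by
  have hsub : uIcc u v ⊆ Ioo a b := ordConnected_Ioo.uIcc_subset hu hv
  have hleft : ∫ x in u..v, (x - a)⁻¹ = log ((v - a) / (u - a)) := by
    rw [integral_comp_sub_right (fun x ↦ x⁻¹), integral_inv
      (notMem_uIcc_of_lt (sub_pos.2 hu.1) (sub_pos.2 hv.1))]
  have hright : ∫ x in u..v, (b - x)⁻¹ = log ((b - u) / (b - v)) := by
    rw [integral_comp_sub_left (fun x ↦ x⁻¹), integral_inv
      (notMem_uIcc_of_lt (sub_pos.2 hv.2) (sub_pos.2 hu.2))]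
  rw [integral_add, hleft, hright]
  · exact intervalIntegrable_inv (fun x hx ↦ (sub_pos.2 (hsub hx).1).ne') (by fun_prop)
  · exact intervalIntegrable_inv (fun x hx ↦ (sub_pos.2 (hsub hx).2).ne') (by fun_prop)

noncomputable def semicircle (a b x : ℝ) : ℝ := √((x - a) * (b - x))

theorem hasDerivAt_semicircle {a b x : ℝ} (hx : x ∈ Ioo a b) :
    HasDerivAt (semicircle a b) ((a + b - 2 * x) / (2 * semicircle a b x)) x := by
  have hg : 0 < (x - a) * (b - x) := mul_pos (sub_pos.2 hx.1) (sub_pos.2 hx.2)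
  refine HasDerivAt.sqrt ?_ hg.ne'
  exact (((hasDerivAt_id x).sub_const a).mul ((hasDerivAt_id x).const_sub b)).congr_deriv
    (by simp only [id]; ring)

theorem one_div_semicircle_mul_sqrt_one_add_deriv_sq {a b x : ℝ} (hx : x ∈ Ioo a b) :
    1 / semicircle a b x * √(1 + deriv (semicircle a b) x ^ 2)
      = ((x - a)⁻¹ + (b - x)⁻¹) / 2 := by
  have hxa : 0 < x - a := sub_pos.2 hx.1
  have hbx : 0 < b - x := sub_pos.2 hx.2
  set r := semicircle a b x
  have hr : 0 < r := sqrt_pos.2 (mul_pos hxa hbx)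
  have hr2 : r ^ 2 = (x - a) * (b - x) := sq_sqrt (mul_pos hxa hbx).le
  have hsq : 1 + ((a + b - 2 * x) / (2 * r)) ^ 2 = ((b - a) / (2 * r)) ^ 2 := by
    field_simp
    linear_combination 4 * hr2
  rw [(hasDerivAt_semicircle hx).deriv, hsq,
    sqrt_sq (div_nonneg (by linarith) (by positivity))]
  field_simp
  linear_combination (a - b) * hr2

theorem integral_semicircle_length {a b u v : ℝ} (hu : u ∈ Ioo a b) (hv : v ∈ Ioo a b) :
    ∫ x in u..v, 1 / semicircle a b x * √(1 + deriv (semicircle a b) x ^ 2)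
      = (log ((v - a) / (u - a)) + log ((b - u) / (b - v))) / 2 := by
  rw [integral_congr fun x hx ↦ one_div_semicircle_mul_sqrt_one_add_deriv_sq
    (ordConnected_Ioo.uIcc_subset hu hv hx), integral_div, integral_inv_sub_add_inv_sub hu hv]

theorem stmt_2_general (a b ε : ℝ) (hε : 0 < ε) (hεab : 2 * ε < b - a)
    (y : ℝ → ℝ) (hy : ∀ x, y x = Real.sqrt ((x - a) * (b - x)))
    (xm xp : ℝ)
    (hxm : xm = ((a + b) - Real.sqrt ((b - a) ^ 2 - 4 * ε ^ 2)) / 2)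
    (hxp : xp = ((a + b) + Real.sqrt ((b - a) ^ 2 - 4 * ε ^ 2)) / 2) :
    ∫ x in xm..xp, (1 / y x) * Real.sqrt (1 + (deriv y x) ^ 2)
      = 2 * Real.log ((b - a + Real.sqrt ((b - a) ^ 2 - 4 * ε ^ 2)) / (2 * ε)) := by
  obtain rfl : y = semicircle a b := funext hy
  have hdisc : 0 < (b - a) ^ 2 - 4 * ε ^ 2 := by nlinarith
  set s := √((b - a) ^ 2 - 4 * ε ^ 2)
  have hs : 0 < s := sqrt_pos.2 hdisc
  have hs2 : s ^ 2 = (b - a) ^ 2 - 4 * ε ^ 2 := sq_sqrt hdisc.le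
  have hsba : s < b - a := by nlinarith
  have hxm_mem : xm ∈ Ioo a b := by constructor <;> linarith
  have hxp_mem : xp ∈ Ioo a b := by constructor <;> linarith
  have hratio : (xp - a) / (xm - a) = ((b - a + s) / (2 * ε)) ^ 2 := by
    rw [div_eq_iff (sub_pos.2 hxm_mem.1).ne', hxp, hxm]
    field_simp
    linear_combination (b - a + s) * hs2
  rw [integral_semicircle_length hxm_mem hxp_mem, show b - xm = xp - a by linarith,
    show b - xp = xm - a by linarith, hratio, log_pow]
  ring

/-- For `a < b`, `0 < 2ε < b - a`, `y x = √((x-a)(b-x))` and `x₋, x₊` the two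
roots of `ε² + (x-a)(x-b) = 0`, the hyperbolic length integral
`∫ (1/y)√(1 + y'²)` from `x₋` to `x₊` equals
`2 log((b - a + √((b-a)² - 4ε²)) / (2ε))`. -/
theorem stmt_2 (a b ε : ℝ) (hab : a < b) (hε : 0 < ε) (hεab : 2 * ε < b - a)
    (y : ℝ → ℝ) (hy : ∀ x, y x = Real.sqrt ((x - a) * (b - x)))
    (xm xp : ℝ)
    (hxm : xm = ((a + b) - Real.sqrt ((b - a) ^ 2 - 4 * ε ^ 2)) / 2)
    (hxp : xp = ((a + b) + Real.sqrt ((b - a) ^ 2 - 4 * ε ^ 2)) / 2) :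
    ∫ x in xm..xp, (1 / y x) * Real.sqrt (1 + (deriv y x) ^ 2)
      = 2 * Real.log ((b - a + Real.sqrt ((b - a) ^ 2 - 4 * ε ^ 2)) / (2 * ε)) :=
  stmt_2_general a b ε hε hεab y hy xm xp hxm hxp
end

section
/- Let a₁ < a₂ < a₃ < a₄ be real numbers, and for 0 < 2ε < b - a set L(a, b, ε) = 2 · log((b - a + sqrt((b - a)^2 - 4ε^2)) / (2ε)). Then, as ε tends to 0 from the right, the quantity L(a₁, a₂, ε) + L(a₃, a₄, ε) - L(a₁, a₃, ε) - L(a₂, a₄, ε) converges to 2 · log( ((a₂ - a₁)(a₄ - a₃)) / ((a₃ - a₁)(a₄ - a₂)) ), i.e. twice the natural logarithm of the cross ratio [a₁, a₄; a₂, a₃]. -/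
/-! Each truncated length diverges like `-2 log ε`; in the alternating sum these divergences
cancel, and what survives is `Σ ± 2 log (b - a)`, the limits of the renormalized lengths
`L(a, b, ε) + 2 log ε`. -/

open Filter

/-- The truncated hyperbolic length of the geodesic joining the ideal boundary
points `a < b`, cut off at height `ε`:
`L(a, b, ε) = 2 log((b - a + √((b-a)² - 4ε²)) / (2ε))`. -/
noncomputable def truncGeodesicLength (a b ε : ℝ) : ℝ :=
  2 * Real.log ((b - a + Real.sqrt ((b - a) ^ 2 - 4 * ε ^ 2)) / (2 * ε))

open Real Topology

lemma truncGeodesicLength_add_two_mul_log {a b ε : ℝ} (hab : a < b) (hε : 0 < ε) :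
    truncGeodesicLength a b ε + 2 * log ε =
      2 * log ((b - a + √((b - a) ^ 2 - 4 * ε ^ 2)) / 2) := by
  have hpos : 0 < (b - a + √((b - a) ^ 2 - 4 * ε ^ 2)) / 2 := by
    have := sqrt_nonneg ((b - a) ^ 2 - 4 * ε ^ 2)
    linarith
  rw [truncGeodesicLength, ← div_div, log_div (by positivity) hε.ne']
  ring

lemma tendsto_truncGeodesicLength_add_two_mul_log {a b : ℝ} (hab : a < b) :
    Tendsto (fun ε => truncGeodesicLength a b ε + 2 * log ε) (𝓝[>] 0)
      (𝓝 (2 * log (b - a))) := by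
  have hzero : (b - a + √((b - a) ^ 2 - 4 * (0 : ℝ) ^ 2)) / 2 = b - a := by
    rw [zero_pow two_ne_zero, mul_zero, sub_zero, sqrt_sq (sub_nonneg.2 hab.le), add_self_div_two]
  have hcont : ContinuousAt (fun ε => 2 * log ((b - a + √((b - a) ^ 2 - 4 * ε ^ 2)) / 2)) 0 :=
    continuousAt_const.mul <|
      ContinuousAt.log (by fun_prop) (by rw [hzero]; exact (sub_pos.2 hab).ne')
  rw [← hzero]
  exact (hcont.tendsto.mono_left nhdsWithin_le_nhds).congr'
    (eventually_nhdsWithin_of_forall fun ε hε =>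
      (truncGeodesicLength_add_two_mul_log hab hε).symm)

/-- For `a₁ < a₂ < a₃ < a₄`, as `ε → 0⁺`, the difference of truncated geodesic
lengths `L(a₁,a₂,ε) + L(a₃,a₄,ε) - L(a₁,a₃,ε) - L(a₂,a₄,ε)` converges to
twice the log of the cross ratio `[a₁,a₄;a₂,a₃]`. -/
theorem stmt_7 (a₁ a₂ a₃ a₄ : ℝ) (h12 : a₁ < a₂) (h23 : a₂ < a₃) (h34 : a₃ < a₄) :
    Tendsto (fun ε : ℝ =>
        truncGeodesicLength a₁ a₂ ε + truncGeodesicLength a₃ a₄ ε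
          - truncGeodesicLength a₁ a₃ ε - truncGeodesicLength a₂ a₄ ε)
      (nhdsWithin 0 (Set.Ioi 0))
      (nhds (2 * Real.log (((a₂ - a₁) * (a₄ - a₃)) / ((a₃ - a₁) * (a₄ - a₂))))) := by
  have h13 := h12.trans h23
  have h24 := h23.trans h34
  have hlim := (((tendsto_truncGeodesicLength_add_two_mul_log h12).add
    (tendsto_truncGeodesicLength_add_two_mul_log h34)).sub
    (tendsto_truncGeodesicLength_add_two_mul_log h13)).sub
    (tendsto_truncGeodesicLength_add_two_mul_log h24)
  have hcross : 2 * log (((a₂ - a₁) * (a₄ - a₃)) / ((a₃ - a₁) * (a₄ - a₂))) =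
      2 * log (a₂ - a₁) + 2 * log (a₄ - a₃) - 2 * log (a₃ - a₁) - 2 * log (a₄ - a₂) := by
    have d12 := (sub_pos.2 h12).ne'
    have d34 := (sub_pos.2 h34).ne'
    have d13 := (sub_pos.2 h13).ne'
    have d24 := (sub_pos.2 h24).ne'
    rw [log_div (mul_ne_zero d12 d34) (mul_ne_zero d13 d24), log_mul d12 d34, log_mul d13 d24]
    ring
  rw [hcross]
  convert hlim using 2
  ring
end

section
/- Let a < b be real numbers, R = (b - a)/2, c = (a + b)/2, and let ε satisfy 0 < ε < R. Define the curve γ from ℝ to the hyperbolic upper half-plane by γ(θ) = c + R·e^{iθ} (which has positive imaginary part for θ in (0, π)). Then the total variation of γ, with respect to the hyperbolic distance, over the closed interval [arcsin(ε/R), π - arcsin(ε/R)] equals 2 · log((b - a + sqrt((b - a)^2 - 4ε^2)) / (2ε)). -/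
/-!
The Möbius map `z ↦ (z - b) / (z - a)` is an isometry of `ℍ` sending `c + R e^{iθ}` to
`i tan (θ / 2)`, so along the semicircle the hyperbolic distance is that of the imaginary axis,
`|log tan (x / 2) - log tan (y / 2)|`. Hence the variation of `γ` is the variation of the
increasing function `θ ↦ log tan (θ / 2)`, namely its increment `-2 log tan (arcsin (ε / R) / 2)`
between the symmetric endpoints, and `tan (arcsin x / 2) = x / (1 + √(1 - x²))`.
-/

open Real UpperHalfPlane MatrixGroups

open Complex in
theorem Complex.exp_mul_I_sub_one_div_add_one (θ : ℂ) :
    (exp (θ * I) - 1) / (exp (θ * I) + 1) = I * tan (θ / 2) := by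
  have hexp : exp (θ * I) = (cos (θ / 2) + sin (θ / 2) * I) ^ 2 := by
    rw [← exp_mul_I, ← exp_nat_mul]; ring_nf
  have hsc := sin_sq_add_cos_sq (θ / 2)
  have hden : exp (θ * I) + 1 = 2 * cos (θ / 2) * (cos (θ / 2) + sin (θ / 2) * I) := by
    rw [hexp]; linear_combination -hsc + sin (θ / 2) ^ 2 * I_sq
  by_cases h : cos (θ / 2) = 0
  · simp [hden, h, tan_eq_sin_div_cos]
  have hne : cos (θ / 2) + sin (θ / 2) * I ≠ 0 := by rw [← exp_mul_I]; exact exp_ne_zero _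
  rw [hden, div_eq_iff (by simp [h, hne]), tan_eq_sin_div_cos, hexp]
  field_simp
  linear_combination hsc - sin (θ / 2) ^ 2 * I_sq

-- Where `cos (x / 2) = 0` both sides are the junk value `0`.
theorem Real.tan_half_eq_sin_div_one_add_cos (x : ℝ) : tan (x / 2) = sin x / (1 + cos x) := by
  have hs : sin x = 2 * sin (x / 2) * cos (x / 2) := by rw [← sin_two_mul]; ring_nf
  have hc : 1 + cos x = 2 * cos (x / 2) ^ 2 := by rw [cos_sq]; ring_nf
  rw [tan_eq_sin_div_cos, hs, hc]
  by_cases h : cos (x / 2) = 0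
  · simp [h]
  field_simp

theorem Real.inv_tan_half_arcsin {x : ℝ} (h₀ : 0 ≤ x) (h₁ : x ≤ 1) :
    (tan (arcsin x / 2))⁻¹ = (1 + √(1 - x ^ 2)) / x := by
  rw [tan_half_eq_sin_div_one_add_cos, sin_arcsin (by linarith) h₁, cos_arcsin, inv_div]

theorem Real.inv_tan_half_arcsin_div_half {d ε : ℝ} (hd : 0 < d) (hε : 0 ≤ ε) (hεd : 2 * ε ≤ d) :
    (tan (arcsin (ε / (d / 2)) / 2))⁻¹ = (d + √(d ^ 2 - 4 * ε ^ 2)) / (2 * ε) := by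
  have hsqrt : √(d ^ 2 - 4 * ε ^ 2) = d * √(1 - (ε / (d / 2)) ^ 2) := by
    rw [show d ^ 2 - 4 * ε ^ 2 = d ^ 2 * (1 - (ε / (d / 2)) ^ 2) by field_simp; ring,
      sqrt_mul (sq_nonneg _), sqrt_sq hd.le]
  rw [inv_tan_half_arcsin (by positivity) ((div_le_one (by linarith)).2 (by linarith)), hsqrt]
  field_simp

theorem Real.monotoneOn_log_tan_half : MonotoneOn (fun θ ↦ log (tan (θ / 2))) (Set.Ioo 0 π) := by
  intro x hx y hy hxy
  have hx' : x / 2 ∈ Set.Ioo (-(π / 2)) (π / 2) := ⟨by linarith [hx.1, pi_pos], by linarith [hx.2]⟩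
  have hy' : y / 2 ∈ Set.Ioo (-(π / 2)) (π / 2) := ⟨by linarith [hy.1, pi_pos], by linarith [hy.2]⟩
  exact log_le_log (tan_pos_of_pos_of_lt_pi_div_two (by linarith [hx.1]) hx'.2)
    (strictMonoOn_tan.monotoneOn hx' hy' (by linarith))

theorem eVariationOn.eq_of_edist_eq {α E F : Type*} [LinearOrder α] [PseudoEMetricSpace E]
    [PseudoEMetricSpace F] {f : α → E} {g : α → F} {s : Set α}
    (h : ∀ x ∈ s, ∀ y ∈ s, edist (f x) (f y) = edist (g x) (g y)) :
    eVariationOn f s = eVariationOn g s :=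
  iSup_congr fun p ↦ Finset.sum_congr rfl fun _ _ ↦ h _ (p.2.2.2 _) _ (p.2.2.2 _)

namespace UpperHalfPlane

noncomputable def moebiusOfEndpoints {a b : ℝ} (hab : a < b) : SL(2, ℝ) :=
  ⟨(√(b - a))⁻¹ • !![1, -b; 1, -a], by
    rw [Matrix.det_smul, Matrix.det_fin_two_of, Fintype.card_fin, inv_pow,
      sq_sqrt (sub_nonneg.2 hab.le)]
    field_simp [(sub_pos.2 hab).ne']
    ring⟩

theorem coe_moebiusOfEndpoints_smul {a b : ℝ} (hab : a < b) (z : ℍ) :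
    ((moebiusOfEndpoints hab • z : ℍ) : ℂ) = (z - b) / (z - a) := by
  have hs : (√(b - a) : ℂ) ≠ 0 := by exact_mod_cast (sqrt_pos.2 (sub_pos.2 hab)).ne'
  rw [coe_specialLinearGroup_apply]
  simp only [Algebra.algebraMap_self, moebiusOfEndpoints, Matrix.smul_of, Matrix.smul_cons,
    smul_eq_mul, mul_one, mul_neg, Matrix.smul_empty, Fin.isValue, Matrix.of_apply,
    Matrix.cons_val', Matrix.cons_val_zero, Matrix.cons_val_fin_one, map_inv₀, ringHom_apply,
    Complex.ofReal_inv, Matrix.cons_val_one, Complex.ofReal_neg, Complex.ofReal_mul]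
  field_simp
  ring

theorem coe_moebiusOfEndpoints_smul_of_coe_eq {a b θ : ℝ} (hab : a < b) {z : ℍ}
    (hz : (z : ℂ) = ↑((a + b) / 2) + ↑((b - a) / 2) * Complex.exp (θ * Complex.I)) :
    ((moebiusOfEndpoints hab • z : ℍ) : ℂ) = Complex.I * (tan (θ / 2) : ℝ) := by
  have hr : ((b - a) / 2 : ℝ) ≠ 0 := by linarith
  have hb : (z : ℂ) - b = ↑((b - a) / 2) * (Complex.exp (θ * Complex.I) - 1) := by
    rw [hz]; push_cast; ring
  have ha : (z : ℂ) - a = ↑((b - a) / 2) * (Complex.exp (θ * Complex.I) + 1) := by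
    rw [hz]; push_cast; ring
  rw [coe_moebiusOfEndpoints_smul, hb, ha, mul_div_mul_left _ _ (by exact_mod_cast hr),
    Complex.exp_mul_I_sub_one_div_add_one]
  push_cast
  rfl

theorem dist_eq_dist_log_tan_of_coe_eq {a b x y : ℝ} (hab : a < b) {z w : ℍ}
    (hz : (z : ℂ) = ↑((a + b) / 2) + ↑((b - a) / 2) * Complex.exp (x * Complex.I))
    (hw : (w : ℂ) = ↑((a + b) / 2) + ↑((b - a) / 2) * Complex.exp (y * Complex.I)) :
    dist z w = dist (log (tan (x / 2))) (log (tan (y / 2))) := by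
  have hz' := coe_moebiusOfEndpoints_smul_of_coe_eq hab hz
  have hw' := coe_moebiusOfEndpoints_smul_of_coe_eq hab hw
  rw [← dist_smul (moebiusOfEndpoints hab), dist_of_re_eq, ← coe_im, ← coe_im, hz', hw']
  · simp [-Complex.ofReal_tan]
  · rw [← coe_re, ← coe_re, hz', hw']; simp [-Complex.ofReal_tan]

end UpperHalfPlane

/-- Let `a < b`, `R = (b-a)/2`, `c = (a+b)/2`, `0 < ε < R`, and let
`γ : ℝ → ℍ` be a curve which on the interval
`[arcsin(ε/R), π - arcsin(ε/R)]` is given by `γ(θ) = c + R·e^{iθ}`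
(parametrizing the geodesic semicircle `y² + (x-a)(x-b) = 0`). Then the total
variation of `γ` over that interval — with respect to the hyperbolic
distance — equals `2 log((b - a + √((b-a)² - 4ε²)) / (2ε))`. -/
theorem stmt_9 (a b R c ε : ℝ) (hab : a < b)
    (hR : R = (b - a) / 2) (hc : c = (a + b) / 2)
    (hε : 0 < ε) (hεR : ε < R)
    (γ : ℝ → UpperHalfPlane)
    (hγ : ∀ θ ∈ Set.Icc (arcsin (ε / R)) (π - arcsin (ε / R)),
      (γ θ : ℂ) = (c : ℂ) + (R : ℂ) * Complex.exp (θ * Complex.I)) :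
    eVariationOn γ (Set.Icc (arcsin (ε / R)) (π - arcsin (ε / R)))
      = ENNReal.ofReal
          (2 * Real.log ((b - a + Real.sqrt ((b - a) ^ 2 - 4 * ε ^ 2)) / (2 * ε))) := by
  subst hR hc
  set l := arcsin (ε / ((b - a) / 2))
  have hl₀ : 0 < l := arcsin_pos.2 (div_pos hε (by linarith))
  have hl₁ : l < π / 2 := arcsin_lt_pi_div_two.2 ((div_lt_one (by linarith)).2 hεR)
  calc eVariationOn γ (Set.Icc l (π - l))
      = eVariationOn (fun θ ↦ log (tan (θ / 2))) (Set.Icc l (π - l)) :=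
        eVariationOn.eq_of_edist_eq fun θ hθ φ hφ ↦ by
          rw [edist_dist, edist_dist, dist_eq_dist_log_tan_of_coe_eq hab (hγ θ hθ) (hγ φ hφ)]
    _ = ENNReal.ofReal (log (tan ((π - l) / 2)) - log (tan (l / 2))) := by
        have hsub : Set.Icc l (π - l) ⊆ Set.Ioo 0 π :=
          fun θ hθ ↦ ⟨by linarith [hθ.1], by linarith [hθ.2]⟩
        simpa using (monotoneOn_log_tan_half.mono hsub).eVariationOn_eq
          (Set.left_mem_Icc.2 (by linarith)) (Set.right_mem_Icc.2 (by linarith))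
    _ = _ := by
        congr 1
        rw [show (π - l) / 2 = π / 2 - l / 2 by ring, tan_pi_div_two_sub,
          ← inv_tan_half_arcsin_div_half (sub_pos.2 hab) hε.le (by linarith), log_inv]
        ring
end

section
/- Let n ≥ 2 and let m be an integer with 2 ≤ m ≤ n. Let δ > 0 and let Q = (-δ, δ)^{n-1} × [0, δ) ⊆ ℝⁿ with coordinates (x', y), x' ∈ ℝ^{n-1}, y ≥ 0. Suppose u and v are real-valued functions on Q all of whose partial derivatives up to order m exist and are continuous up to the boundary face {y = 0}, and that both satisfy, for y > 0, the graphical minimal surface equation in hyperbolic space: ∂ᵧ∂ᵧw + Σ_{i=1}^{n-1} ∂ᵢ∂ᵢw - Σ_{j,k ∈ {1,…,n-1,y}} (∂ⱼw · ∂ₖw · ∂ⱼ∂ₖw) / (1 + (∂ᵧw)² + Σ_{i=1}^{n-1}(∂ᵢw)²) - (n / y) · ∂ᵧw = 0. If u(x', 0) = v(x', 0) for all x' ∈ (-δ, δ)^{n-1}, then for every integer i with 0 ≤ i ≤ m and every x' ∈ (-δ, δ)^{n-1}, the i-th pure y-derivatives agree: ∂ᵧ^{(i)}u(x', 0) = ∂ᵧ^{(i)}v(x',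 0). In particular ∂ᵧu(x', 0) = 0 = ∂ᵧv(x', 0). -/
/-- The half-open box `Q = (-δ, δ)^k × [0, δ)` in coordinates `(x', y)`. -/
def boxQ (k : ℕ) (δ : ℝ) : Set ((Fin k → ℝ) × ℝ) :=
  {p | (∀ i, p.1 i ∈ Set.Ioo (-δ) δ) ∧ p.2 ∈ Set.Ico 0 δ}

/-- The coordinate direction vectors in `ℝ^k × ℝ`: `Sum.inl i` is the `i`-th
horizontal direction `∂ᵢ`, and `Sum.inr ()` is the vertical direction `∂ᵧ`. -/
def dirVec (k : ℕ) : Fin k ⊕ Unit → (Fin k → ℝ) × ℝ :=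
  Sum.elim (fun i => (Pi.single i 1, 0)) (fun _ => (0, 1))

/-- The directional derivative, within a set `Q`, of `f` in direction `w`. -/
noncomputable def dWithin {E : Type*} [NormedAddCommGroup E] [NormedSpace ℝ E]
    (Q : Set E) (f : E → ℝ) (w : E) (p : E) : ℝ :=
  fderivWithin ℝ f Q p w

/-- The second directional derivative, within a set `Q`. -/
noncomputable def d2Within {E : Type*} [NormedAddCommGroup E] [NormedSpace ℝ E]
    (Q : Set E) (f : E → ℝ) (w₁ w₂ : E) (p : E) : ℝ :=
  dWithin Q (dWithin Q f w₂) w₁ p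

/-- `w` satisfies, at the points of `Q = (-δ,δ)^{n-1} × [0,δ)` with `y > 0`,
the graphical minimal surface equation in hyperbolic space `ℍ^{n+1}`:
`∂ᵧ∂ᵧw + Σᵢ∂ᵢ∂ᵢw - Σⱼₖ ∂ⱼw ∂ₖw ∂ⱼ∂ₖw / (1 + (∂ᵧw)² + Σᵢ(∂ᵢw)²) - (n/y)∂ᵧw = 0`,
where the sums over `j, k` range over all of `{1, …, n-1, y}`. -/
def IsHypMinimalGraph (n : ℕ) (δ : ℝ) (w : ((Fin (n - 1) → ℝ) × ℝ) → ℝ) : Prop :=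
  ∀ p ∈ boxQ (n - 1) δ, 0 < p.2 →
    (∑ j : Fin (n - 1) ⊕ Unit,
        d2Within (boxQ (n - 1) δ) w (dirVec (n - 1) j) (dirVec (n - 1) j) p)
      - (∑ j : Fin (n - 1) ⊕ Unit, ∑ k : Fin (n - 1) ⊕ Unit,
          dWithin (boxQ (n - 1) δ) w (dirVec (n - 1) j) p
            * dWithin (boxQ (n - 1) δ) w (dirVec (n - 1) k) p
            * d2Within (boxQ (n - 1) δ) w (dirVec (n - 1) j) (dirVec (n - 1) k) p)
        / (1 + ∑ j : Fin (n - 1) ⊕ Unit,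
            (dWithin (boxQ (n - 1) δ) w (dirVec (n - 1) j) p) ^ 2)
      - (n / p.2) * dWithin (boxQ (n - 1) δ) w (dirVec (n - 1) (Sum.inr ())) p
      = 0

/-!
Multiplying the equation by `y` puts it in the Fuchsian form `y ∂ᵧ²w - n ∂ᵧw = y G(w)`, where
`G(w)` involves derivatives of `w` of order at most two. Differentiating `K` times in `y` gives
`y ∂ᵧ^(K+2) w + (K - n) ∂ᵧ^(K+1) w = y ∂ᵧ^K G + K ∂ᵧ^(K-1) G` for `y > 0`. Letting `y → 0` in this
identity, and in this identity divided by `y`, gives `(J - n) ∂ᵧ^(J+1) w = J ∂ᵧ^(J-1) G(w)` on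
`{y = 0}` for every `J < m`, and the coefficient `J - n` is non-zero. For `J = 0` this says that
`∂ᵧw = 0` there.

Now induct on `J`: if `∂ᵧ^i (u - v) = 0` on `{y = 0}` for `i ≤ J`, then the same holds for every
tangential derivative of `u - v`, so every first and second derivative of `u` agrees with that of
`v` to order `J` except `∂ᵧ²`, which agrees to order `J - 1` but enters `G` multiplied by
`(∂ᵧv)²`. Since the product of functions vanishing to orders `p` and `q` vanishes to order `p + q`,
`∂ᵧ^(J-1) (G(u) - G(v)) = 0`, hence `∂ᵧ^(J+1) (u - v) = 0`.
-/

open Set Filter Topology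

section DirectionalDerivative

variable {E : Type*} [NormedAddCommGroup E] [NormedSpace ℝ E] {s : Set E} {f g : E → ℝ} {v w x : E}

noncomputable def iterDWithin (s : Set E) (v : E) (j : ℕ) (f : E → ℝ) : E → ℝ :=
  (fun g => dWithin s g v)^[j] f

lemma iterDWithin_succ (j : ℕ) :
    iterDWithin s v (j + 1) f = iterDWithin s v j (dWithin s f v) :=
  Function.iterate_succ_apply _ _ _

lemma iterDWithin_succ' (j : ℕ) :
    iterDWithin s v (j + 1) f = dWithin s (iterDWithin s v j f) v :=
  Function.iterate_succ_apply' _ _ _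

lemma dWithin_congr (h : EqOn f g s) : EqOn (dWithin s f v) (dWithin s g v) s := fun x hx => by
  simp only [dWithin, fderivWithin_congr h (h hx)]

lemma iterDWithin_congr (h : EqOn f g s) (j : ℕ) :
    EqOn (iterDWithin s v j f) (iterDWithin s v j g) s := by
  induction j with
  | zero => exact h
  | succ j ih => rw [iterDWithin_succ', iterDWithin_succ']; exact dWithin_congr ih

lemma contDiffOn_dWithin {m n : WithTop ℕ∞} (hf : ContDiffOn ℝ n f s) (hs : UniqueDiffOn ℝ s)
    (hmn : m + 1 ≤ n) (v : E) : ContDiffOn ℝ m (dWithin s f v) s :=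
  (ContinuousLinearMap.apply ℝ ℝ v).contDiff.comp_contDiffOn (hf.fderivWithin hs hmn)

lemma contDiffOn_iterDWithin {m n : WithTop ℕ∞} {j : ℕ} (hf : ContDiffOn ℝ n f s)
    (hs : UniqueDiffOn ℝ s) (hmn : m + j ≤ n) : ContDiffOn ℝ m (iterDWithin s v j f) s := by
  induction j generalizing m with
  | zero => exact hf.of_le (by simpa using hmn)
  | succ j ih =>
    rw [iterDWithin_succ']
    refine contDiffOn_dWithin (ih ?_) hs le_rfl v
    rw [Nat.cast_succ] at hmn
    rwa [add_right_comm, add_assoc]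

lemma contDiffOn_d2Within {m n : WithTop ℕ∞} (hf : ContDiffOn ℝ n f s) (hs : UniqueDiffOn ℝ s)
    (hmn : m + 2 ≤ n) (v w : E) : ContDiffOn ℝ m (d2Within s f v w) s :=
  contDiffOn_dWithin (contDiffOn_dWithin hf hs (m := m + 1)
    (by rwa [add_assoc, one_add_one_eq_two]) w) hs le_rfl v

lemma dWithin_add (hs : UniqueDiffWithinAt ℝ s x) (hf : DifferentiableWithinAt ℝ f s x)
    (hg : DifferentiableWithinAt ℝ g s x) :
    dWithin s (fun y => f y + g y) v x = dWithin s f v x + dWithin s g v x := by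
  simp [dWithin, fderivWithin_fun_add hs hf hg]

lemma dWithin_sub (hs : UniqueDiffWithinAt ℝ s x) (hf : DifferentiableWithinAt ℝ f s x)
    (hg : DifferentiableWithinAt ℝ g s x) :
    dWithin s (fun y => f y - g y) v x = dWithin s f v x - dWithin s g v x := by
  simp [dWithin, fderivWithin_fun_sub hs hf hg]

lemma dWithin_mul (hs : UniqueDiffWithinAt ℝ s x) (hf : DifferentiableWithinAt ℝ f s x)
    (hg : DifferentiableWithinAt ℝ g s x) :
    dWithin s (fun y => f y * g y) v x = dWithin s f v x * g x + f x * dWithin s g v x := by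
  simp [dWithin, fderivWithin_fun_mul hs hf hg]; ring

lemma dWithin_sum {ι : Type*} {t : Finset ι} {F : ι → E → ℝ} (hs : UniqueDiffWithinAt ℝ s x)
    (hF : ∀ i ∈ t, DifferentiableWithinAt ℝ (F i) s x) :
    dWithin s (fun y => ∑ i ∈ t, F i y) v x = ∑ i ∈ t, dWithin s (F i) v x := by
  simp [dWithin, fderivWithin_fun_sum hs hF]

lemma eqOn_dWithin_sub (hs : UniqueDiffOn ℝ s) (hf : DifferentiableOn ℝ f s)
    (hg : DifferentiableOn ℝ g s) :
    EqOn (dWithin s (fun y => f y - g y) v) (fun y => dWithin s f v y - dWithin s g v y) s :=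
  fun y hy => dWithin_sub (hs y hy) (hf y hy) (hg y hy)

lemma iterDWithin_add {j : ℕ} (hs : UniqueDiffOn ℝ s) (hf : ContDiffOn ℝ j f s)
    (hg : ContDiffOn ℝ j g s) :
    EqOn (iterDWithin s v j (fun y => f y + g y))
      (fun y => iterDWithin s v j f y + iterDWithin s v j g y) s := by
  induction j generalizing f g with
  | zero => exact fun _ _ => rfl
  | succ j ih =>
    intro x hx
    have hD : EqOn (dWithin s (fun y => f y + g y) v)
        (fun y => dWithin s f v y + dWithin s g v y) s := fun y hy =>
      dWithin_add (hs y hy) (hf.differentiableOn (by simp) y hy)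
        (hg.differentiableOn (by simp) y hy)
    simp only [iterDWithin_succ]
    rw [iterDWithin_congr hD j hx]
    exact ih (contDiffOn_dWithin hf hs (by simp) v) (contDiffOn_dWithin hg hs (by simp) v) hx

lemma iterDWithin_sub {j : ℕ} (hs : UniqueDiffOn ℝ s) (hf : ContDiffOn ℝ j f s)
    (hg : ContDiffOn ℝ j g s) :
    EqOn (iterDWithin s v j (fun y => f y - g y))
      (fun y => iterDWithin s v j f y - iterDWithin s v j g y) s := by
  induction j generalizing f g with
  | zero => exact fun _ _ => rfl
  | succ j ih =>
    intro x hx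
    have hD : EqOn (dWithin s (fun y => f y - g y) v)
        (fun y => dWithin s f v y - dWithin s g v y) s := fun y hy =>
      dWithin_sub (hs y hy) (hf.differentiableOn (by simp) y hy)
        (hg.differentiableOn (by simp) y hy)
    simp only [iterDWithin_succ]
    rw [iterDWithin_congr hD j hx]
    exact ih (contDiffOn_dWithin hf hs (by simp) v) (contDiffOn_dWithin hg hs (by simp) v) hx

lemma iterDWithin_sum {ι : Type*} {t : Finset ι} {F : ι → E → ℝ} {j : ℕ} (hs : UniqueDiffOn ℝ s)
    (hF : ∀ i ∈ t, ContDiffOn ℝ j (F i) s) :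
    EqOn (iterDWithin s v j (fun y => ∑ i ∈ t, F i y))
      (fun y => ∑ i ∈ t, iterDWithin s v j (F i) y) s := by
  induction j generalizing F with
  | zero => exact fun _ _ => rfl
  | succ j ih =>
    intro x hx
    have hD : EqOn (dWithin s (fun y => ∑ i ∈ t, F i y) v)
        (fun y => ∑ i ∈ t, dWithin s (F i) v y) s := fun y hy =>
      dWithin_sum (hs y hy) fun i hi => (hF i hi).differentiableOn (by simp) y hy
    simp only [iterDWithin_succ]
    rw [iterDWithin_congr hD j hx]
    exact ih (fun i hi => contDiffOn_dWithin (hF i hi) hs (by simp) v) hx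

lemma dWithin_comm {n : WithTop ℕ∞} (hf : ContDiffOn ℝ n f s) (hn : 2 ≤ n) (hs : UniqueDiffOn ℝ s)
    (hx : x ∈ closure (interior s)) (hxs : x ∈ s) :
    dWithin s (dWithin s f v) w x = dWithin s (dWithin s f w) v x := by
  have hsymm : IsSymmSndFDerivWithinAt ℝ f s x :=
    (hf x hxs).isSymmSndFDerivWithinAt (by simpa [minSmoothness_of_isRCLikeNormedField]) hs hx hxs
  have hdiff : DifferentiableWithinAt ℝ (fderivWithin ℝ f s) s x :=
    (hf.fderivWithin hs (m := 1) (by rw [one_add_one_eq_two]; exact hn)).differentiableOn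
      (by simp) x hxs
  have hsecond : ∀ a b : E,
      dWithin s (dWithin s f a) b x = fderivWithin ℝ (fderivWithin ℝ f s) s x b a := by
    intro a b
    change fderivWithin ℝ (fun y => fderivWithin ℝ f s y a) s x b = _
    rw [fderivWithin_clm_apply (hs x hxs) hdiff (differentiableWithinAt_const a)]
    simp
  rw [hsecond, hsecond, hsymm.eq]

lemma iterDWithin_dWithin_comm {r j : ℕ} (hf : ContDiffOn ℝ r f s) (hj : j < r)
    (hs : UniqueDiffOn ℝ s) (hsi : s ⊆ closure (interior s)) :
    EqOn (iterDWithin s v j (dWithin s f w)) (dWithin s (iterDWithin s v j f) w) s := by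
  induction j generalizing r f with
  | zero => exact fun _ _ => rfl
  | succ j ih =>
    intro x hx
    have hD : EqOn (dWithin s (dWithin s f w) v) (dWithin s (dWithin s f v) w) s :=
      fun y hy => dWithin_comm hf (by exact_mod_cast (show 2 ≤ r by omega)) hs (hsi hy) hy
    rw [iterDWithin_succ, iterDWithin_congr hD j hx, iterDWithin_succ]
    exact ih (r := r - 1)
      (contDiffOn_dWithin hf hs (by exact_mod_cast (show r - 1 + 1 ≤ r by omega)) v) (by omega) hx

lemma dWithin_eq_zero_of_eqOn_zero {S : Set E} {H : E → ℝ} (hS : S ⊆ s)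
    (hH : DifferentiableWithinAt ℝ H s x) (hzero : ∀ y ∈ S, H y = 0)
    (hline : ∀ᶠ t in 𝓝 (0 : ℝ), x + t • w ∈ S) : dWithin s H w x = 0 := by
  have hγ : HasDerivAt (fun t : ℝ => x + t • w) w 0 := by
    simpa using ((hasDerivAt_id (0 : ℝ)).smul_const w).const_add x
  have hcomp : HasDerivWithinAt (H ∘ fun t : ℝ => x + t • w) (dWithin s H w x)
      {t | x + t • w ∈ s} 0 :=
    (by simpa using hH.hasFDerivWithinAt : HasFDerivWithinAt H _ s (x + (0 : ℝ) • w)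
      ).comp_hasDerivWithinAt 0 hγ.hasDerivWithinAt fun t ht => ht
  have hnhds : {t : ℝ | x + t • w ∈ s} ∈ 𝓝 0 := hline.mono fun t ht => hS ht
  have hzero' : (H ∘ fun t : ℝ => x + t • w) =ᶠ[𝓝 0] fun _ => 0 :=
    hline.mono fun t ht => hzero _ ht
  exact (hcomp.hasDerivAt hnhds).unique ((hasDerivAt_const 0 (0 : ℝ)).congr_of_eventuallyEq hzero')

lemma iteratedDerivWithin_comp_add_smul {t : Set ℝ} {r j : ℕ} (hs : UniqueDiffOn ℝ s)
    (ht : UniqueDiffOn ℝ t) (hmaps : MapsTo (fun τ : ℝ => x + τ • v) t s)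
    (hf : ContDiffOn ℝ r f s) (hj : j ≤ r) :
    EqOn (iteratedDerivWithin j (fun τ => f (x + τ • v)) t)
      (fun τ => iterDWithin s v j f (x + τ • v)) t := by
  induction j with
  | zero => exact fun _ _ => rfl
  | succ j ih =>
    intro τ hτ
    rw [iteratedDerivWithin_succ, derivWithin_congr (ih (by omega)) (ih (by omega) hτ),
      iterDWithin_succ']
    have hline : HasDerivWithinAt (fun τ : ℝ => x + τ • v) v t τ := by
      simpa using (((hasDerivAt_id τ).smul_const v).const_add x).hasDerivWithinAt
    have hdiff : DifferentiableWithinAt ℝ (iterDWithin s v j f) s (x + τ • v) :=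
      (contDiffOn_iterDWithin (m := 1) hf hs (by exact_mod_cast (show 1 + j ≤ r by omega))
        ).differentiableOn (by simp) _ (hmaps hτ)
    exact (hdiff.hasFDerivWithinAt.comp_hasDerivWithinAt τ hline hmaps).derivWithin (ht τ hτ)

end DirectionalDerivative

section VanishesToOrder

variable {E : Type*} [NormedAddCommGroup E] [NormedSpace ℝ E] {s S : Set E} {v : E}
  {f g h : E → ℝ} {k p q r : ℕ}

def VanishesToOrder (s S : Set E) (v : E) (r : ℕ) (h : E → ℝ) : Prop :=
  ∀ j < r, ∀ x ∈ S, iterDWithin s v j h x = 0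

namespace VanishesToOrder

lemma zero : VanishesToOrder s S v 0 h := fun _ hj => absurd hj (Nat.not_lt_zero _)

lemma mono (hh : VanishesToOrder s S v r h) (hqr : q ≤ r) : VanishesToOrder s S v q h :=
  fun j hj => hh j (hj.trans_le hqr)

lemma congr (hh : VanishesToOrder s S v r f) (hfg : EqOn f g s) (hS : S ⊆ s) :
    VanishesToOrder s S v r g :=
  fun j hj x hx => iterDWithin_congr hfg j (hS hx) ▸ hh j hj x hx

lemma dWithin (hh : VanishesToOrder s S v r h) : VanishesToOrder s S v (r - 1) (dWithin s h v) :=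
  fun j hj x hx => by rw [← iterDWithin_succ]; exact hh (j + 1) (by omega) x hx

lemma add (hs : UniqueDiffOn ℝ s) (hS : S ⊆ s) (hf : ContDiffOn ℝ k f s) (hg : ContDiffOn ℝ k g s)
    (hrk : r ≤ k + 1) (hf0 : VanishesToOrder s S v r f) (hg0 : VanishesToOrder s S v r g) :
    VanishesToOrder s S v r (fun y => f y + g y) := fun j hj x hx => by
  have hjk : (j : WithTop ℕ∞) ≤ k := by exact_mod_cast (show j ≤ k by omega)
  rw [iterDWithin_add hs (hf.of_le hjk) (hg.of_le hjk) (hS hx)]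
  simp [hf0 j hj x hx, hg0 j hj x hx]

lemma sub (hs : UniqueDiffOn ℝ s) (hS : S ⊆ s) (hf : ContDiffOn ℝ k f s) (hg : ContDiffOn ℝ k g s)
    (hrk : r ≤ k + 1) (hf0 : VanishesToOrder s S v r f) (hg0 : VanishesToOrder s S v r g) :
    VanishesToOrder s S v r (fun y => f y - g y) := fun j hj x hx => by
  have hjk : (j : WithTop ℕ∞) ≤ k := by exact_mod_cast (show j ≤ k by omega)
  rw [iterDWithin_sub hs (hf.of_le hjk) (hg.of_le hjk) (hS hx)]
  simp [hf0 j hj x hx, hg0 j hj x hx]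

lemma sum {ι : Type*} {t : Finset ι} {F : ι → E → ℝ} (hs : UniqueDiffOn ℝ s) (hS : S ⊆ s)
    (hF : ∀ i ∈ t, ContDiffOn ℝ k (F i) s) (hrk : r ≤ k + 1)
    (hF0 : ∀ i ∈ t, VanishesToOrder s S v r (F i)) :
    VanishesToOrder s S v r (fun y => ∑ i ∈ t, F i y) := fun j hj x hx => by
  have hjk : (j : WithTop ℕ∞) ≤ k := by exact_mod_cast (show j ≤ k by omega)
  rw [iterDWithin_sum hs (fun i hi => (hF i hi).of_le hjk) (hS hx)]
  exact Finset.sum_eq_zero fun i hi => hF0 i hi j hj x hx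

/-- The bound `j ≤ k` is kept apart from `j < p + q` so that the induction can lower `k`
together with `p` or `q`. -/
lemma iterDWithin_mul_eq_zero (hs : UniqueDiffOn ℝ s) (hS : S ⊆ s) {j : ℕ} :
    ∀ {k p q : ℕ} {f g : E → ℝ}, ContDiffOn ℝ k f s → ContDiffOn ℝ k g s →
      VanishesToOrder s S v p f → VanishesToOrder s S v q g → j ≤ k → j < p + q →
      ∀ x ∈ S, iterDWithin s v j (fun y => f y * g y) x = 0 := by
  induction j with
  | zero =>
    intro k p q f g _ _ hf0 hg0 _ hpq x hx
    rcases Nat.eq_zero_or_pos p with rfl | hp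
    · exact mul_eq_zero_of_right _ (hg0 0 (by omega) x hx)
    · exact mul_eq_zero_of_left (hf0 0 hp x hx) _
  | succ j ih =>
    intro k p q f g hf hg hf0 hg0 hjk hpq x hx
    have hf' := contDiffOn_dWithin (m := (k - 1 : ℕ)) hf hs
      (by exact_mod_cast (show k - 1 + 1 ≤ k by omega)) v
    have hg' := contDiffOn_dWithin (m := (k - 1 : ℕ)) hg hs
      (by exact_mod_cast (show k - 1 + 1 ≤ k by omega)) v
    have hfk := hf.of_le (m := (k - 1 : ℕ)) (by exact_mod_cast (show k - 1 ≤ k by omega))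
    have hgk := hg.of_le (m := (k - 1 : ℕ)) (by exact_mod_cast (show k - 1 ≤ k by omega))
    have hD : EqOn (_root_.dWithin s (fun y => f y * g y) v)
        (fun y => _root_.dWithin s f v y * g y + f y * _root_.dWithin s g v y) s := fun y hy =>
      dWithin_mul (hs y hy) (hf.differentiableOn (by norm_cast; omega) y hy)
        (hg.differentiableOn (by norm_cast; omega) y hy)
    have hjk' : (j : WithTop ℕ∞) ≤ (k - 1 : ℕ) := by exact_mod_cast (show j ≤ k - 1 by omega)
    rw [iterDWithin_succ, iterDWithin_congr hD j (hS hx),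
      iterDWithin_add hs ((hf'.mul hgk).of_le hjk') ((hfk.mul hg').of_le hjk') (hS hx)]
    simp only [ih hf' hgk hf0.dWithin hg0 (by omega) (by omega) x hx,
      ih hfk hg' hf0 hg0.dWithin (by omega) (by omega) x hx, add_zero]

lemma mul (hs : UniqueDiffOn ℝ s) (hS : S ⊆ s) (hf : ContDiffOn ℝ k f s) (hg : ContDiffOn ℝ k g s)
    (hf0 : VanishesToOrder s S v p f) (hg0 : VanishesToOrder s S v q g) (hpq : p + q ≤ k + 1) :
    VanishesToOrder s S v (p + q) (fun y => f y * g y) := fun j hj =>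
  iterDWithin_mul_eq_zero hs hS hf hg hf0 hg0 (by omega) hj

lemma mul_left (hs : UniqueDiffOn ℝ s) (hS : S ⊆ s) (hf : ContDiffOn ℝ k f s)
    (hg : ContDiffOn ℝ k g s) (hg0 : VanishesToOrder s S v q g) (hqk : q ≤ k + 1) :
    VanishesToOrder s S v q (fun y => f y * g y) := by
  simpa using mul hs hS hf hg zero hg0 (by omega)

lemma dWithin_of_tangent {w : E} (hs : UniqueDiffOn ℝ s) (hsi : s ⊆ closure (interior s))
    (hS : S ⊆ s) (htan : ∀ x ∈ S, ∀ᶠ t in 𝓝 (0 : ℝ), x + t • w ∈ S) (hh : ContDiffOn ℝ k h s)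
    (hrk : r ≤ k) (hh0 : VanishesToOrder s S v r h) :
    VanishesToOrder s S v r (_root_.dWithin s h w) := fun j hj x hx => by
  rw [iterDWithin_dWithin_comm hh (by omega) hs hsi (hS hx)]
  refine dWithin_eq_zero_of_eqOn_zero hS ?_ (hh0 j hj) (htan x hx)
  exact (contDiffOn_iterDWithin (m := 1) hh hs
    (by exact_mod_cast (show 1 + j ≤ k by omega))).differentiableOn (by simp) x (hS hx)

end VanishesToOrder

end VanishesToOrder

section FuchsianODE

variable {s : Set ℝ} {a g : ℝ → ℝ} {c : ℝ} {r : ℕ}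

lemma hasDerivWithinAt_iteratedDerivWithin {n : WithTop ℕ∞} {j : ℕ} {y : ℝ}
    (ha : ContDiffOn ℝ n a s) (hs : UniqueDiffOn ℝ s) (hj : (j : WithTop ℕ∞) < n) (hy : y ∈ s) :
    HasDerivWithinAt (iteratedDerivWithin j a s) (iteratedDerivWithin (j + 1) a s y) s y := by
  rw [iteratedDerivWithin_succ]
  exact ((ha.differentiableOn_iteratedDerivWithin hj hs) y hy).hasDerivWithinAt

lemma hasDerivWithinAt_natCast_mul_iteratedDerivWithin_pred {K : ℕ} {y : ℝ}
    (hg : ContDiffOn ℝ r g s) (hs : UniqueDiffOn ℝ s) (hK : K ≤ r) (hy : y ∈ s) :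
    HasDerivWithinAt (fun t => (K : ℝ) * iteratedDerivWithin (K - 1) g s t)
      (K * iteratedDerivWithin K g s y) s y := by
  rcases K with _ | K
  · simpa using hasDerivWithinAt_const y s (0 : ℝ)
  · exact (hasDerivWithinAt_iteratedDerivWithin hg hs (by exact_mod_cast hK) hy).const_mul _

lemma iteratedDerivWithin_fuchsian (hs : UniqueDiffOn ℝ s) (ha : ContDiffOn ℝ (r + 2) a s)
    (hg : ContDiffOn ℝ r g s)
    (hode : ∀ y ∈ s, 0 < y →
      y * iteratedDerivWithin 2 a s y - c * iteratedDerivWithin 1 a s y = y * g y)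
    {K : ℕ} (hK : K ≤ r) {y : ℝ} (hy : y ∈ s) (hy0 : 0 < y) :
    y * iteratedDerivWithin (K + 2) a s y + (K - c) * iteratedDerivWithin (K + 1) a s y
      = y * iteratedDerivWithin K g s y + K * iteratedDerivWithin (K - 1) g s y := by
  induction K generalizing y with
  | zero => simpa [sub_eq_add_neg, neg_mul] using hode y hy hy0
  | succ K ih =>
    have hev : (fun t => t * iteratedDerivWithin (K + 2) a s t
          + (K - c) * iteratedDerivWithin (K + 1) a s t)
        =ᶠ[𝓝[s] y] fun t => t * iteratedDerivWithin K g s t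
          + K * iteratedDerivWithin (K - 1) g s t := by
      filter_upwards [self_mem_nhdsWithin, mem_nhdsWithin_of_mem_nhds (Ioi_mem_nhds hy0)]
        with t ht ht0 using ih (by omega) ht ht0
    have hL := ((hasDerivWithinAt_id y s).mul
        (hasDerivWithinAt_iteratedDerivWithin ha hs (j := K + 2)
          (by exact_mod_cast (show K + 2 < r + 2 by omega)) hy)).add
      ((hasDerivWithinAt_iteratedDerivWithin ha hs (j := K + 1)
          (by exact_mod_cast (show K + 1 < r + 2 by omega)) hy).const_mul (K - c))
    have hR := ((hasDerivWithinAt_id y s).mul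
        (hasDerivWithinAt_iteratedDerivWithin hg hs (j := K) (by exact_mod_cast hK) hy)).add
      (hasDerivWithinAt_natCast_mul_iteratedDerivWithin_pred hg hs (K := K) (by omega) hy)
    have := (hL.derivWithin (hs y hy)).symm.trans
      ((hev.derivWithin_eq (ih (by omega) hy hy0)).trans (hR.derivWithin (hs y hy)))
    simp only [id, one_mul] at this
    rw [show K + 1 + 1 = K + 2 from rfl] at this
    push_cast
    linarith

lemma eq_zero_and_eq_neg_of_mul_add_eq_zero {h k : ℝ → ℝ} {h' : ℝ}
    (hk : ContinuousWithinAt k (Ioi 0) 0) (hh : HasDerivWithinAt h h' (Ioi 0) 0)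
    (heq : ∀ᶠ y in 𝓝[>] 0, y * k y + h y = 0) : h 0 = 0 ∧ h' = -k 0 := by
  have hlim : Tendsto (fun y => -(y * k y)) (𝓝[>] 0) (𝓝 (-(0 * k 0))) :=
    ((continuousWithinAt_id.tendsto).mul hk.tendsto).neg
  have hh0 : h 0 = 0 := by
    refine tendsto_nhds_unique hh.continuousWithinAt.tendsto ?_
    simpa using hlim.congr' (heq.mono fun y hy => by linarith)
  have hslope : Tendsto (slope h 0) (𝓝[>] 0) (𝓝 h') :=
    (hasDerivWithinAt_iff_tendsto_slope.mp hh).mono_left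
      (nhdsWithin_mono _ fun y hy => ⟨hy, ne_of_gt hy⟩)
  refine ⟨hh0, tendsto_nhds_unique hslope ((hk.tendsto.neg).congr' ?_)⟩
  filter_upwards [heq, self_mem_nhdsWithin] with y hy hy0
  rw [slope_def_field, hh0, sub_zero, sub_zero, eq_div_iff (ne_of_gt hy0)]
  linarith

lemma fuchsian_boundary_relation (hs : UniqueDiffOn ℝ s) (hs0 : 0 ∈ s) (hsnhds : s ∈ 𝓝[>] 0)
    (ha : ContDiffOn ℝ (r + 2) a s) (hg : ContDiffOn ℝ r g s)
    (hode : ∀ y ∈ s, 0 < y →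
      y * iteratedDerivWithin 2 a s y - c * iteratedDerivWithin 1 a s y = y * g y)
    {J : ℕ} (hJ : J ≤ r + 1) :
    (J - c) * iteratedDerivWithin (J + 1) a s 0 = J * iteratedDerivWithin (J - 1) g s 0 := by
  have key : ∀ K ≤ r,
      ((K - c) * iteratedDerivWithin (K + 1) a s 0 - K * iteratedDerivWithin (K - 1) g s 0 = 0) ∧
      ((K - c) * iteratedDerivWithin (K + 2) a s 0 - K * iteratedDerivWithin K g s 0
        = -(iteratedDerivWithin (K + 2) a s 0 - iteratedDerivWithin K g s 0)) := by
    intro K hK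
    refine eq_zero_and_eq_neg_of_mul_add_eq_zero
      (h := fun y => (K - c) * iteratedDerivWithin (K + 1) a s y
        - K * iteratedDerivWithin (K - 1) g s y)
      (k := fun y => iteratedDerivWithin (K + 2) a s y - iteratedDerivWithin K g s y) ?_ ?_ ?_
    · refine ContinuousWithinAt.mono_of_mem_nhdsWithin ?_ hsnhds
      exact ((ha.continuousOn_iteratedDerivWithin
        (by exact_mod_cast (show K + 2 ≤ r + 2 by omega)) hs).sub
        (hg.continuousOn_iteratedDerivWithin (by exact_mod_cast hK) hs)) 0 hs0
    · refine HasDerivWithinAt.mono_of_mem_nhdsWithin ?_ hsnhds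
      exact ((hasDerivWithinAt_iteratedDerivWithin ha hs
        (by exact_mod_cast (show K + 1 < r + 2 by omega)) hs0).const_mul _).sub
        (hasDerivWithinAt_natCast_mul_iteratedDerivWithin_pred hg hs hK hs0)
    · filter_upwards [hsnhds, self_mem_nhdsWithin] with y hy hy0
      linear_combination iteratedDerivWithin_fuchsian hs ha hg hode hK hy hy0
  rcases J with _ | K
  · simpa [sub_eq_zero] using (key 0 (Nat.zero_le r)).1
  · have := (key K (by omega)).2
    push_cast
    linear_combination this

end FuchsianODE

section Box

variable {k : ℕ} {δ : ℝ}

def boxFace (k : ℕ) (δ : ℝ) : Set ((Fin k → ℝ) × ℝ) :=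
  {p | (∀ i, p.1 i ∈ Ioo (-δ) δ) ∧ p.2 = 0}

lemma boxQ_eq_prod : boxQ k δ = (univ.pi fun _ : Fin k => Ioo (-δ) δ) ×ˢ Ico 0 δ := by
  ext ⟨a, b⟩; simp [boxQ, Set.mem_pi]

lemma convex_boxQ : Convex ℝ (boxQ k δ) := by
  rw [boxQ_eq_prod]; exact (convex_pi fun _ _ => convex_Ioo _ _).prod (convex_Ico _ _)

lemma interior_boxQ : interior (boxQ k δ) = (univ.pi fun _ : Fin k => Ioo (-δ) δ) ×ˢ Ioo 0 δ := by
  rw [boxQ_eq_prod, interior_prod_eq, interior_Ico,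
    (isOpen_set_pi finite_univ fun _ _ => isOpen_Ioo).interior_eq]

lemma nonempty_interior_boxQ (hδ : 0 < δ) : (interior (boxQ k δ)).Nonempty :=
  ⟨(0, δ / 2), by
    rw [interior_boxQ]; exact ⟨fun _ _ => ⟨by simpa, hδ⟩, by constructor <;> linarith⟩⟩

lemma uniqueDiffOn_boxQ (hδ : 0 < δ) : UniqueDiffOn ℝ (boxQ k δ) :=
  uniqueDiffOn_convex convex_boxQ (nonempty_interior_boxQ hδ)

lemma boxQ_subset_closure_interior (hδ : 0 < δ) : boxQ k δ ⊆ closure (interior (boxQ k δ)) := by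
  rw [convex_boxQ.closure_interior_eq_closure_of_nonempty_interior (nonempty_interior_boxQ hδ)]
  exact subset_closure

lemma boxFace_subset_boxQ (hδ : 0 < δ) : boxFace k δ ⊆ boxQ k δ := fun p hp =>
  ⟨hp.1, by rw [hp.2]; exact ⟨le_rfl, hδ⟩⟩

lemma eventually_add_smul_dirVec_inl_mem_boxFace {p : (Fin k → ℝ) × ℝ} (hp : p ∈ boxFace k δ)
    (i : Fin k) : ∀ᶠ t in 𝓝 (0 : ℝ), p + t • dirVec k (.inl i) ∈ boxFace k δ := by
  have hcoord : ∀ j, ∀ᶠ t in 𝓝 (0 : ℝ),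
      p.1 j + t * (Pi.single i (1 : ℝ) : Fin k → ℝ) j ∈ Ioo (-δ) δ := fun j =>
    ((show Continuous fun t : ℝ => p.1 j + t * (Pi.single i (1 : ℝ) : Fin k → ℝ) j by fun_prop
      ).tendsto' 0 (p.1 j) (by simp)).eventually (isOpen_Ioo.mem_nhds (hp.1 j))
  filter_upwards [eventually_all.mpr hcoord] with t ht
  exact ⟨fun j => by simpa [dirVec] using ht j, by simp [dirVec, hp.2]⟩

lemma vertical_line_eq (x' : Fin k → ℝ) (t : ℝ) :
    ((x', 0) : (Fin k → ℝ) × ℝ) + t • dirVec k (.inr ()) = (x', t) := by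
  simp [dirVec]

lemma mapsTo_vertical_line {x' : Fin k → ℝ} (hx' : ∀ i, x' i ∈ Ioo (-δ) δ) :
    MapsTo (fun t : ℝ => ((x', 0) : (Fin k → ℝ) × ℝ) + t • dirVec k (.inr ())) (Ico 0 δ)
      (boxQ k δ) := fun t ht => by
  simp only [vertical_line_eq]; exact ⟨hx', ht⟩

lemma contDiffOn_vertical_slice {n : WithTop ℕ∞} {f : (Fin k → ℝ) × ℝ → ℝ}
    (hf : ContDiffOn ℝ n f (boxQ k δ)) {x' : Fin k → ℝ} (hx' : ∀ i, x' i ∈ Ioo (-δ) δ) :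
    ContDiffOn ℝ n (fun t => f (x', t)) (Ico 0 δ) := by
  have hline : ContDiff ℝ n fun t : ℝ => ((x', 0) : (Fin k → ℝ) × ℝ) + t • dirVec k (.inr ()) := by
    fun_prop
  convert hf.comp hline.contDiffOn (mapsTo_vertical_line hx') using 1
  funext t; simp only [Function.comp, vertical_line_eq]

lemma iteratedDerivWithin_vertical_slice (hδ : 0 < δ) {r j : ℕ} {f : (Fin k → ℝ) × ℝ → ℝ}
    (hf : ContDiffOn ℝ r f (boxQ k δ)) (hj : j ≤ r) {x' : Fin k → ℝ}
    (hx' : ∀ i, x' i ∈ Ioo (-δ) δ) {t : ℝ} (ht : t ∈ Ico 0 δ) :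
    iteratedDerivWithin j (fun t => f (x', t)) (Ico 0 δ) t
      = iterDWithin (boxQ k δ) (dirVec k (.inr ())) j f (x', t) := by
  simpa only [vertical_line_eq] using iteratedDerivWithin_comp_add_smul (uniqueDiffOn_boxQ hδ)
    (uniqueDiffOn_Ico 0 δ) (mapsTo_vertical_line hx') hf hj ht

end Box

section MinimalSurfaceOperator

variable {k : ℕ} {δ : ℝ} {r : ℕ} {w : (Fin k → ℝ) × ℝ → ℝ}

noncomputable def graphWeight (k : ℕ) (δ : ℝ) (w : (Fin k → ℝ) × ℝ → ℝ) (p : (Fin k → ℝ) × ℝ) :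
    ℝ :=
  1 + ∑ j, (dWithin (boxQ k δ) w (dirVec k j) p) ^ 2

noncomputable def hessianTerm (k : ℕ) (δ : ℝ) (w : (Fin k → ℝ) × ℝ → ℝ) (p : (Fin k → ℝ) × ℝ) :
    ℝ :=
  ∑ j, ∑ l, dWithin (boxQ k δ) w (dirVec k j) p * dWithin (boxQ k δ) w (dirVec k l) p
    * d2Within (boxQ k δ) w (dirVec k j) (dirVec k l) p

noncomputable def horizontalLaplacian (k : ℕ) (δ : ℝ) (w : (Fin k → ℝ) × ℝ → ℝ)
    (p : (Fin k → ℝ) × ℝ) : ℝ :=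
  ∑ i, d2Within (boxQ k δ) w (dirVec k (.inl i)) (dirVec k (.inl i)) p

noncomputable def mseRemainder (k : ℕ) (δ : ℝ) (w : (Fin k → ℝ) × ℝ → ℝ) (p : (Fin k → ℝ) × ℝ) :
    ℝ :=
  hessianTerm k δ w p / graphWeight k δ w p - horizontalLaplacian k δ w p

lemma graphWeight_pos (p : (Fin k → ℝ) × ℝ) : 0 < graphWeight k δ w p := by
  unfold graphWeight; positivity

lemma IsHypMinimalGraph.fuchsian {n : ℕ} {w : (Fin (n - 1) → ℝ) × ℝ → ℝ}
    (hw : IsHypMinimalGraph n δ w) {p : (Fin (n - 1) → ℝ) × ℝ} (hp : p ∈ boxQ (n - 1) δ)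
    (hp0 : 0 < p.2) :
    p.2 * iterDWithin (boxQ (n - 1) δ) (dirVec (n - 1) (.inr ())) 2 w p
      - n * iterDWithin (boxQ (n - 1) δ) (dirVec (n - 1) (.inr ())) 1 w p
      = p.2 * mseRemainder (n - 1) δ w p := by
  have e := hw p hp hp0
  rw [Fintype.sum_sum_type, Fintype.univ_unit, Finset.sum_singleton] at e
  have hn : p.2 * (n / p.2) = n := mul_div_cancel₀ _ hp0.ne'
  unfold mseRemainder hessianTerm graphWeight horizontalLaplacian
  change p.2 * d2Within _ w _ _ p - n * dWithin _ w _ p = _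
  linear_combination p.2 * e + dWithin (boxQ (n - 1) δ) w (dirVec (n - 1) (.inr ())) p * hn

lemma contDiffOn_graphWeight (hδ : 0 < δ) (hw : ContDiffOn ℝ (r + 1) w (boxQ k δ)) :
    ContDiffOn ℝ r (graphWeight k δ w) (boxQ k δ) :=
  contDiffOn_const.add <| ContDiffOn.sum fun _ _ =>
    (contDiffOn_dWithin hw (uniqueDiffOn_boxQ hδ) le_rfl _).pow 2

lemma contDiffOn_hessianTerm (hδ : 0 < δ) (hw : ContDiffOn ℝ (r + 2) w (boxQ k δ)) :
    ContDiffOn ℝ r (hessianTerm k δ w) (boxQ k δ) := by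
  have h1 := fun j => contDiffOn_dWithin (m := r) hw (uniqueDiffOn_boxQ hδ)
    (by exact_mod_cast (show r + 1 ≤ r + 2 by omega)) (dirVec k j)
  exact ContDiffOn.sum fun j _ => ContDiffOn.sum fun l _ =>
    ((h1 j).mul (h1 l)).mul (contDiffOn_d2Within hw (uniqueDiffOn_boxQ hδ) le_rfl _ _)

lemma contDiffOn_horizontalLaplacian (hδ : 0 < δ) (hw : ContDiffOn ℝ (r + 2) w (boxQ k δ)) :
    ContDiffOn ℝ r (horizontalLaplacian k δ w) (boxQ k δ) :=
  ContDiffOn.sum fun _ _ => contDiffOn_d2Within hw (uniqueDiffOn_boxQ hδ) le_rfl _ _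

lemma contDiffOn_mseRemainder (hδ : 0 < δ) (hw : ContDiffOn ℝ (r + 2) w (boxQ k δ)) :
    ContDiffOn ℝ r (mseRemainder k δ w) (boxQ k δ) :=
  ((contDiffOn_hessianTerm hδ hw).div
    (contDiffOn_graphWeight hδ (hw.of_le (by exact_mod_cast (show r + 1 ≤ r + 2 by omega))))
    fun p _ => (graphWeight_pos p).ne').sub (contDiffOn_horizontalLaplacian hδ hw)

end MinimalSurfaceOperator

section BoundaryJets

variable {k : ℕ} {δ : ℝ} {r J : ℕ} {u v : (Fin k → ℝ) × ℝ → ℝ}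

abbrev VanishesOnFace (k : ℕ) (δ : ℝ) (r : ℕ) (h : (Fin k → ℝ) × ℝ → ℝ) : Prop :=
  VanishesToOrder (boxQ k δ) (boxFace k δ) (dirVec k (.inr ())) r h

lemma VanishesOnFace.dWithin_inl (hδ : 0 < δ) {n q : ℕ} {h : (Fin k → ℝ) × ℝ → ℝ}
    (hh : ContDiffOn ℝ n h (boxQ k δ)) (hqn : q ≤ n) (hh0 : VanishesOnFace k δ q h) (i : Fin k) :
    VanishesOnFace k δ q (dWithin (boxQ k δ) h (dirVec k (.inl i))) :=
  VanishesToOrder.dWithin_of_tangent (uniqueDiffOn_boxQ hδ) (boxQ_subset_closure_interior hδ)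
    (boxFace_subset_boxQ hδ) (fun _ hp => eventually_add_smul_dirVec_inl_mem_boxFace hp i) hh hqn
    hh0

lemma contDiffOn_dWithin_dirVec (hδ : 0 < δ) {n q : ℕ} {w : (Fin k → ℝ) × ℝ → ℝ}
    (hw : ContDiffOn ℝ n w (boxQ k δ)) (hq : q + 1 ≤ n) (j : Fin k ⊕ Unit) :
    ContDiffOn ℝ q (dWithin (boxQ k δ) w (dirVec k j)) (boxQ k δ) :=
  contDiffOn_dWithin hw (uniqueDiffOn_boxQ hδ) (by exact_mod_cast hq) _

lemma contDiffOn_d2Within_dirVec (hδ : 0 < δ) {w : (Fin k → ℝ) × ℝ → ℝ}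
    (hw : ContDiffOn ℝ (r + 2 : ℕ) w (boxQ k δ)) (j l : Fin k ⊕ Unit) :
    ContDiffOn ℝ r (d2Within (boxQ k δ) w (dirVec k j) (dirVec k l)) (boxQ k δ) :=
  contDiffOn_d2Within hw (uniqueDiffOn_boxQ hδ) (by norm_cast) _ _

lemma VanishesOnFace.sub_dWithin_inl (hδ : 0 < δ) (hu : ContDiffOn ℝ (r + 2 : ℕ) u (boxQ k δ))
    (hv : ContDiffOn ℝ (r + 2 : ℕ) v (boxQ k δ)) (hJ : J ≤ r + 1)
    (huv : VanishesOnFace k δ (J + 1) fun p => u p - v p) (i : Fin k) :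
    VanishesOnFace k δ (J + 1) fun p =>
      dWithin (boxQ k δ) u (dirVec k (.inl i)) p - dWithin (boxQ k δ) v (dirVec k (.inl i)) p :=
  (huv.dWithin_inl hδ (hu.sub hv) (by omega) i).congr
    (eqOn_dWithin_sub (uniqueDiffOn_boxQ hδ) (hu.differentiableOn (by simp))
      (hv.differentiableOn (by simp))) (boxFace_subset_boxQ hδ)

lemma VanishesOnFace.sub_dWithin_inr (hδ : 0 < δ) (hu : ContDiffOn ℝ (r + 2 : ℕ) u (boxQ k δ))
    (hv : ContDiffOn ℝ (r + 2 : ℕ) v (boxQ k δ))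
    (huv : VanishesOnFace k δ (J + 1) fun p => u p - v p) :
    VanishesOnFace k δ J fun p =>
      dWithin (boxQ k δ) u (dirVec k (.inr ())) p - dWithin (boxQ k δ) v (dirVec k (.inr ())) p :=
  (by simpa using huv.dWithin : VanishesOnFace k δ J _).congr
    (eqOn_dWithin_sub (uniqueDiffOn_boxQ hδ) (hu.differentiableOn (by simp))
      (hv.differentiableOn (by simp))) (boxFace_subset_boxQ hδ)

lemma VanishesOnFace.sub_dWithin (hδ : 0 < δ) (hu : ContDiffOn ℝ (r + 2 : ℕ) u (boxQ k δ))
    (hv : ContDiffOn ℝ (r + 2 : ℕ) v (boxQ k δ)) (hJ : J ≤ r + 1)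
    (huv : VanishesOnFace k δ (J + 1) fun p => u p - v p) (j : Fin k ⊕ Unit) :
    VanishesOnFace k δ J fun p =>
      dWithin (boxQ k δ) u (dirVec k j) p - dWithin (boxQ k δ) v (dirVec k j) p := by
  rcases j with i | ⟨⟩
  · exact (huv.sub_dWithin_inl hδ hu hv hJ i).mono (by omega)
  · exact huv.sub_dWithin_inr hδ hu hv

lemma eqOn_d2Within_sub (hδ : 0 < δ) (hu : ContDiffOn ℝ (r + 2 : ℕ) u (boxQ k δ))
    (hv : ContDiffOn ℝ (r + 2 : ℕ) v (boxQ k δ)) (j l : Fin k ⊕ Unit) :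
    EqOn (dWithin (boxQ k δ) (fun p =>
        dWithin (boxQ k δ) u (dirVec k l) p - dWithin (boxQ k δ) v (dirVec k l) p) (dirVec k j))
      (fun p => d2Within (boxQ k δ) u (dirVec k j) (dirVec k l) p
        - d2Within (boxQ k δ) v (dirVec k j) (dirVec k l) p) (boxQ k δ) :=
  eqOn_dWithin_sub (uniqueDiffOn_boxQ hδ)
    ((contDiffOn_dWithin_dirVec hδ hu (q := 1) (by omega) l).differentiableOn (by simp))
    ((contDiffOn_dWithin_dirVec hδ hv (q := 1) (by omega) l).differentiableOn (by simp))

lemma VanishesOnFace.sub_d2Within (hδ : 0 < δ) (hu : ContDiffOn ℝ (r + 2 : ℕ) u (boxQ k δ))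
    (hv : ContDiffOn ℝ (r + 2 : ℕ) v (boxQ k δ)) (hJ : J ≤ r + 1)
    (huv : VanishesOnFace k δ (J + 1) fun p => u p - v p) {j l : Fin k ⊕ Unit}
    (hjl : ¬(j = .inr () ∧ l = .inr ())) :
    VanishesOnFace k δ J fun p => d2Within (boxQ k δ) u (dirVec k j) (dirVec k l) p
      - d2Within (boxQ k δ) v (dirVec k j) (dirVec k l) p := by
  refine VanishesToOrder.congr ?_ (eqOn_d2Within_sub hδ hu hv j l) (boxFace_subset_boxQ hδ)
  have hdl := (contDiffOn_dWithin_dirVec hδ hu (q := r + 1) le_rfl l).sub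
    (contDiffOn_dWithin_dirVec hδ hv (q := r + 1) le_rfl l)
  rcases l with i | ⟨⟩
  · rcases j with i' | ⟨⟩
    · exact VanishesOnFace.dWithin_inl hδ hdl hJ
        ((huv.sub_dWithin_inl hδ hu hv hJ i).mono (by omega)) i'
    · simpa using (huv.sub_dWithin_inl hδ hu hv hJ i).dWithin
  · rcases j with i' | ⟨⟩
    · exact (huv.sub_dWithin_inr hδ hu hv).dWithin_inl hδ hdl hJ i'
    · exact absurd ⟨rfl, rfl⟩ hjl

lemma VanishesOnFace.sub_d2Within_inr_inr (hδ : 0 < δ)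
    (hu : ContDiffOn ℝ (r + 2 : ℕ) u (boxQ k δ)) (hv : ContDiffOn ℝ (r + 2 : ℕ) v (boxQ k δ))
    (huv : VanishesOnFace k δ (J + 1) fun p => u p - v p) :
    VanishesOnFace k δ (J - 1) fun p =>
      d2Within (boxQ k δ) u (dirVec k (.inr ())) (dirVec k (.inr ())) p
        - d2Within (boxQ k δ) v (dirVec k (.inr ())) (dirVec k (.inr ())) p :=
  (huv.sub_dWithin_inr hδ hu hv).dWithin.congr (eqOn_d2Within_sub hδ hu hv _ _)
    (boxFace_subset_boxQ hδ)

lemma VanishesOnFace.sub_graphWeight (hδ : 0 < δ) (hu : ContDiffOn ℝ (r + 2 : ℕ) u (boxQ k δ))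
    (hv : ContDiffOn ℝ (r + 2 : ℕ) v (boxQ k δ)) (hJ : J ≤ r + 1)
    (huv : VanishesOnFace k δ (J + 1) fun p => u p - v p) :
    VanishesOnFace k δ J fun p => graphWeight k δ u p - graphWeight k δ v p := by
  have hDu := contDiffOn_dWithin_dirVec hδ hu (q := r) (by omega)
  have hDv := contDiffOn_dWithin_dirVec hδ hv (q := r) (by omega)
  refine VanishesToOrder.congr (f := fun p => ∑ j, (dWithin (boxQ k δ) u (dirVec k j) p
      + dWithin (boxQ k δ) v (dirVec k j) p) * (dWithin (boxQ k δ) u (dirVec k j) p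
      - dWithin (boxQ k δ) v (dirVec k j) p)) ?_ (fun p _ => ?_) (boxFace_subset_boxQ hδ)
  · refine VanishesToOrder.sum (uniqueDiffOn_boxQ hδ) (boxFace_subset_boxQ hδ)
      (fun j _ => ((hDu j).add (hDv j)).mul ((hDu j).sub (hDv j))) hJ fun j _ => ?_
    exact VanishesToOrder.mul_left (uniqueDiffOn_boxQ hδ) (boxFace_subset_boxQ hδ)
      ((hDu j).add (hDv j)) ((hDu j).sub (hDv j)) (huv.sub_dWithin hδ hu hv hJ j) hJ
  · simp only [graphWeight, add_sub_add_left_eq_sub, ← Finset.sum_sub_distrib]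
    exact Finset.sum_congr rfl fun j _ => by ring

lemma VanishesOnFace.mul_sub_d2Within (hδ : 0 < δ) (hu : ContDiffOn ℝ (r + 2 : ℕ) u (boxQ k δ))
    (hv : ContDiffOn ℝ (r + 2 : ℕ) v (boxQ k δ)) (hJ1 : 1 ≤ J) (hJ : J ≤ r + 1)
    (huv : VanishesOnFace k δ (J + 1) fun p => u p - v p)
    (hvy : VanishesOnFace k δ 1 (dWithin (boxQ k δ) v (dirVec k (.inr ())))) (j l : Fin k ⊕ Unit) :
    VanishesOnFace k δ J fun p => dWithin (boxQ k δ) v (dirVec k l) p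
      * (d2Within (boxQ k δ) u (dirVec k j) (dirVec k l) p
        - d2Within (boxQ k δ) v (dirVec k j) (dirVec k l) p) := by
  have hs := uniqueDiffOn_boxQ (k := k) hδ
  have hS := boxFace_subset_boxQ (k := k) hδ
  have hDv := contDiffOn_dWithin_dirVec hδ hv (q := r) (by omega) l
  have hB := (contDiffOn_d2Within_dirVec hδ hu j l).sub (contDiffOn_d2Within_dirVec hδ hv j l)
  by_cases hjl : j = .inr () ∧ l = .inr ()
  · obtain ⟨rfl, rfl⟩ := hjl
    simpa [show 1 + (J - 1) = J by omega] using VanishesToOrder.mul hs hS hDv hB hvy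
      (huv.sub_d2Within_inr_inr hδ hu hv) (by omega)
  · exact VanishesToOrder.mul_left hs hS hDv hB (huv.sub_d2Within hδ hu hv hJ hjl) hJ

lemma VanishesOnFace.sub_hessianSummand (hδ : 0 < δ)
    (hu : ContDiffOn ℝ (r + 2 : ℕ) u (boxQ k δ)) (hv : ContDiffOn ℝ (r + 2 : ℕ) v (boxQ k δ))
    (hJ1 : 1 ≤ J) (hJ : J ≤ r + 1) (huv : VanishesOnFace k δ (J + 1) fun p => u p - v p)
    (hvy : VanishesOnFace k δ 1 (dWithin (boxQ k δ) v (dirVec k (.inr ())))) (j l : Fin k ⊕ Unit) :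
    VanishesOnFace k δ J fun p =>
      dWithin (boxQ k δ) u (dirVec k j) p * dWithin (boxQ k δ) u (dirVec k l) p
          * d2Within (boxQ k δ) u (dirVec k j) (dirVec k l) p
        - dWithin (boxQ k δ) v (dirVec k j) p * dWithin (boxQ k δ) v (dirVec k l) p
          * d2Within (boxQ k δ) v (dirVec k j) (dirVec k l) p := by
  have hs := uniqueDiffOn_boxQ (k := k) hδ
  have hS := boxFace_subset_boxQ (k := k) hδ
  have hDu := contDiffOn_dWithin_dirVec hδ hu (q := r) (by omega)
  have hDv := contDiffOn_dWithin_dirVec hδ hv (q := r) (by omega)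
  have hD2u := contDiffOn_d2Within_dirVec hδ hu j l
  have hD2v := contDiffOn_d2Within_dirVec hδ hv j l
  have hA := huv.sub_dWithin hδ hu hv hJ
  have hAj := VanishesToOrder.mul_left hs hS (hDu l) ((hDu j).sub (hDv j)) (hA j) hJ
  have hAl := VanishesToOrder.mul_left hs hS (hDv j) ((hDu l).sub (hDv l)) (hA l) hJ
  have hprod := VanishesToOrder.add hs hS ((hDu l).mul ((hDu j).sub (hDv j)))
    ((hDv j).mul ((hDu l).sub (hDv l))) hJ hAj hAl
  have hP := ((hDu l).mul ((hDu j).sub (hDv j))).add ((hDv j).mul ((hDu l).sub (hDv l)))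
  refine VanishesToOrder.congr (VanishesToOrder.add hs hS (hD2u.mul hP)
    ((hDv j).mul ((hDv l).mul (hD2u.sub hD2v))) hJ
    (VanishesToOrder.mul_left hs hS hD2u hP hprod hJ)
    (VanishesToOrder.mul_left hs hS (hDv j) ((hDv l).mul (hD2u.sub hD2v))
      (huv.mul_sub_d2Within hδ hu hv hJ1 hJ hvy j l) hJ)) (fun p _ => by ring) hS

lemma VanishesOnFace.sub_hessianTerm (hδ : 0 < δ) (hu : ContDiffOn ℝ (r + 2 : ℕ) u (boxQ k δ))
    (hv : ContDiffOn ℝ (r + 2 : ℕ) v (boxQ k δ)) (hJ1 : 1 ≤ J) (hJ : J ≤ r + 1)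
    (huv : VanishesOnFace k δ (J + 1) fun p => u p - v p)
    (hvy : VanishesOnFace k δ 1 (dWithin (boxQ k δ) v (dirVec k (.inr ())))) :
    VanishesOnFace k δ J fun p => hessianTerm k δ u p - hessianTerm k δ v p := by
  have hs := uniqueDiffOn_boxQ (k := k) hδ
  have hS := boxFace_subset_boxQ (k := k) hδ
  have hDu := contDiffOn_dWithin_dirVec hδ hu (q := r) (by omega)
  have hDv := contDiffOn_dWithin_dirVec hδ hv (q := r) (by omega)
  have hC : ∀ j l, ContDiffOn ℝ r (fun p =>
      dWithin (boxQ k δ) u (dirVec k j) p * dWithin (boxQ k δ) u (dirVec k l) p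
          * d2Within (boxQ k δ) u (dirVec k j) (dirVec k l) p
        - dWithin (boxQ k δ) v (dirVec k j) p * dWithin (boxQ k δ) v (dirVec k l) p
          * d2Within (boxQ k δ) v (dirVec k j) (dirVec k l) p) (boxQ k δ) := fun j l =>
    (((hDu j).mul (hDu l)).mul (contDiffOn_d2Within_dirVec hδ hu j l)).sub
      (((hDv j).mul (hDv l)).mul (contDiffOn_d2Within_dirVec hδ hv j l))
  refine VanishesToOrder.congr (VanishesToOrder.sum (t := Finset.univ) hs hS
    (fun j _ => ContDiffOn.sum fun l _ => hC j l) hJ fun j _ =>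
      VanishesToOrder.sum (t := Finset.univ) hs hS (fun l _ => hC j l) hJ fun l _ =>
        huv.sub_hessianSummand hδ hu hv hJ1 hJ hvy j l) (fun p _ => ?_) hS
  simp only [hessianTerm, ← Finset.sum_sub_distrib]

lemma VanishesOnFace.sub_horizontalLaplacian (hδ : 0 < δ)
    (hu : ContDiffOn ℝ (r + 2 : ℕ) u (boxQ k δ)) (hv : ContDiffOn ℝ (r + 2 : ℕ) v (boxQ k δ))
    (hJ : J ≤ r + 1) (huv : VanishesOnFace k δ (J + 1) fun p => u p - v p) :
    VanishesOnFace k δ J fun p => horizontalLaplacian k δ u p - horizontalLaplacian k δ v p := by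
  refine VanishesToOrder.congr (VanishesToOrder.sum (t := Finset.univ) (uniqueDiffOn_boxQ hδ)
    (boxFace_subset_boxQ hδ) (fun i _ => (contDiffOn_d2Within_dirVec hδ hu _ _).sub
      (contDiffOn_d2Within_dirVec hδ hv _ _)) hJ fun i _ =>
    huv.sub_d2Within hδ hu hv hJ (j := .inl i) (l := .inl i) (by simp)) (fun p _ => ?_)
    (boxFace_subset_boxQ hδ)
  simp only [horizontalLaplacian, Finset.sum_sub_distrib]

lemma VanishesOnFace.sub_mseRemainder (hδ : 0 < δ) (hu : ContDiffOn ℝ (r + 2 : ℕ) u (boxQ k δ))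
    (hv : ContDiffOn ℝ (r + 2 : ℕ) v (boxQ k δ)) (hJ1 : 1 ≤ J) (hJ : J ≤ r + 1)
    (huv : VanishesOnFace k δ (J + 1) fun p => u p - v p)
    (hvy : VanishesOnFace k δ 1 (dWithin (boxQ k δ) v (dirVec k (.inr ())))) :
    VanishesOnFace k δ J fun p => mseRemainder k δ u p - mseRemainder k δ v p := by
  have hs := uniqueDiffOn_boxQ (k := k) hδ
  have hS := boxFace_subset_boxQ (k := k) hδ
  have hu' : ContDiffOn ℝ (r + 2) u (boxQ k δ) := by exact_mod_cast hu
  have hv' : ContDiffOn ℝ (r + 2) v (boxQ k δ) := by exact_mod_cast hv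
  have hWu := (contDiffOn_graphWeight (r := r) hδ (hu'.of_le (by norm_cast; omega))).inv
    fun p _ => (graphWeight_pos (w := u) p).ne'
  have hWv := (contDiffOn_graphWeight (r := r) hδ (hv'.of_le (by norm_cast; omega))).inv
    fun p _ => (graphWeight_pos (w := v) p).ne'
  have hNu := contDiffOn_hessianTerm hδ hu'
  have hNv := contDiffOn_hessianTerm hδ hv'
  have hW := contDiffOn_graphWeight (r := r) hδ (hu'.of_le (by norm_cast; omega))
  have hW' := contDiffOn_graphWeight (r := r) hδ (hv'.of_le (by norm_cast; omega))
  have hTu := contDiffOn_horizontalLaplacian hδ hu'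
  have hTv := contDiffOn_horizontalLaplacian hδ hv'
  refine VanishesToOrder.congr (f := fun p =>
      (graphWeight k δ u p)⁻¹ * (hessianTerm k δ u p - hessianTerm k δ v p)
      - hessianTerm k δ v p * ((graphWeight k δ u p)⁻¹ * (graphWeight k δ v p)⁻¹)
        * (graphWeight k δ u p - graphWeight k δ v p)
      - (horizontalLaplacian k δ u p - horizontalLaplacian k δ v p)) ?_ (fun p _ => ?_) hS
  · refine VanishesToOrder.sub hs hS ((hWu.mul (hNu.sub hNv)).sub
      ((hNv.mul (hWu.mul hWv)).mul (hW.sub hW'))) (hTu.sub hTv) hJ ?_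
      (huv.sub_horizontalLaplacian hδ hu hv hJ)
    exact VanishesToOrder.sub hs hS (hWu.mul (hNu.sub hNv))
      ((hNv.mul (hWu.mul hWv)).mul (hW.sub hW')) hJ
      (VanishesToOrder.mul_left hs hS hWu (hNu.sub hNv)
        (huv.sub_hessianTerm hδ hu hv hJ1 hJ hvy) hJ)
      (VanishesToOrder.mul_left hs hS (hNv.mul (hWu.mul hWv)) (hW.sub hW')
        (huv.sub_graphWeight hδ hu hv hJ) hJ)
  · have hu0 := (graphWeight_pos (k := k) (δ := δ) (w := u) p).ne'
    have hv0 := (graphWeight_pos (k := k) (δ := δ) (w := v) p).ne'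
    simp only [mseRemainder]
    field_simp
    ring

end BoundaryJets

section Main

variable {n r : ℕ} {δ : ℝ} {u v w : (Fin (n - 1) → ℝ) × ℝ → ℝ}

lemma IsHypMinimalGraph.boundary_relation (hδ : 0 < δ) (hw : IsHypMinimalGraph n δ w)
    (hwC : ContDiffOn ℝ (r + 2 : ℕ) w (boxQ (n - 1) δ)) {J : ℕ} (hJ : J ≤ r + 1)
    {p : (Fin (n - 1) → ℝ) × ℝ} (hp : p ∈ boxFace (n - 1) δ) :
    (J - n) * iterDWithin (boxQ (n - 1) δ) (dirVec (n - 1) (.inr ())) (J + 1) w p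
      = J * iterDWithin (boxQ (n - 1) δ) (dirVec (n - 1) (.inr ())) (J - 1)
        (mseRemainder (n - 1) δ w) p := by
  obtain ⟨x', y⟩ := p
  obtain ⟨hx', rfl : y = 0⟩ := hp
  have hwC' : ContDiffOn ℝ (r + 2) w (boxQ (n - 1) δ) := by exact_mod_cast hwC
  have hG := contDiffOn_mseRemainder hδ hwC'
  have h0 : (0 : ℝ) ∈ Ico 0 δ := left_mem_Ico.mpr hδ
  have hslice := fun {j : ℕ} (hj : j ≤ r + 2) {t : ℝ} (ht : t ∈ Ico 0 δ) =>
    iteratedDerivWithin_vertical_slice hδ hwC hj hx' ht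
  have hsliceG := fun {j : ℕ} (hj : j ≤ r) {t : ℝ} (ht : t ∈ Ico 0 δ) =>
    iteratedDerivWithin_vertical_slice hδ hG hj hx' ht
  have key := fuchsian_boundary_relation (uniqueDiffOn_Ico 0 δ) h0 (Ico_mem_nhdsGT hδ)
    (contDiffOn_vertical_slice hwC' hx') (contDiffOn_vertical_slice hG hx') (c := n)
    (fun t ht ht0 => by
      rw [hslice (by omega) ht, hslice (by omega) ht]
      exact hw.fuchsian (p := (x', t)) ⟨hx', ht⟩ ht0) hJ
  rwa [hslice (by omega) h0, hsliceG (by omega) h0] at key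

lemma VanishesOnFace.succ_of_isHypMinimalGraph (hδ : 0 < δ) (hu : IsHypMinimalGraph n δ u)
    (hv : IsHypMinimalGraph n δ v) (huC : ContDiffOn ℝ (r + 2 : ℕ) u (boxQ (n - 1) δ))
    (hvC : ContDiffOn ℝ (r + 2 : ℕ) v (boxQ (n - 1) δ))
    (hvy : VanishesOnFace (n - 1) δ 1 (dWithin (boxQ (n - 1) δ) v (dirVec (n - 1) (.inr ()))))
    {J : ℕ} (hJ : J ≤ r + 1) (hJn : J < n)
    (huv : VanishesOnFace (n - 1) δ (J + 1) fun p => u p - v p) :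
    VanishesOnFace (n - 1) δ (J + 2) fun p => u p - v p := by
  intro j hj p hp
  rcases Nat.lt_succ_iff_lt_or_eq.mp hj with hj | rfl
  · exact huv j hj p hp
  have hpQ := boxFace_subset_boxQ hδ hp
  have hs := uniqueDiffOn_boxQ (k := n - 1) hδ
  have hG : (J : ℝ) * (iterDWithin (boxQ (n - 1) δ) (dirVec (n - 1) (.inr ())) (J - 1)
      (mseRemainder (n - 1) δ u) p - iterDWithin (boxQ (n - 1) δ) (dirVec (n - 1) (.inr ()))
        (J - 1) (mseRemainder (n - 1) δ v) p) = 0 := by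
    rcases Nat.eq_zero_or_pos J with rfl | hJ1
    · simp
    have hGC := fun {w : (Fin (n - 1) → ℝ) × ℝ → ℝ}
        (hw : ContDiffOn ℝ (r + 2 : ℕ) w (boxQ (n - 1) δ)) =>
      (contDiffOn_mseRemainder hδ (by exact_mod_cast hw : ContDiffOn ℝ (r + 2) w _)).of_le
        (m := (J - 1 : ℕ)) (by exact_mod_cast (show J - 1 ≤ r by omega))
    have hdiff : iterDWithin (boxQ (n - 1) δ) (dirVec (n - 1) (.inr ())) (J - 1)
        (mseRemainder (n - 1) δ u) p - iterDWithin (boxQ (n - 1) δ) (dirVec (n - 1) (.inr ()))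
          (J - 1) (mseRemainder (n - 1) δ v) p = 0 :=
      (iterDWithin_sub hs (hGC huC) (hGC hvC) hpQ).symm.trans
        (huv.sub_mseRemainder hδ huC hvC hJ1 hJ hvy (J - 1) (by omega) p hp)
    rw [hdiff, mul_zero]
  have hJn' : (J : ℝ) - n ≠ 0 := sub_ne_zero.mpr (by exact_mod_cast hJn.ne)
  have hC := fun {w : (Fin (n - 1) → ℝ) × ℝ → ℝ}
      (hw : ContDiffOn ℝ (r + 2 : ℕ) w (boxQ (n - 1) δ)) =>
    hw.of_le (m := (J + 1 : ℕ)) (by exact_mod_cast (show J + 1 ≤ r + 2 by omega))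
  refine (iterDWithin_sub hs (hC huC) (hC hvC) hpQ).trans ((mul_eq_zero.mp ?_).resolve_left hJn')
  rw [mul_sub, hu.boundary_relation hδ huC hJ hp, hv.boundary_relation hδ hvC hJ hp, ← mul_sub, hG]

lemma IsHypMinimalGraph.vanishesOnFace_dWithin (hδ : 0 < δ) (hw : IsHypMinimalGraph n δ w)
    (hwC : ContDiffOn ℝ (r + 2 : ℕ) w (boxQ (n - 1) δ)) (hn : n ≠ 0) :
    VanishesOnFace (n - 1) δ 1 (dWithin (boxQ (n - 1) δ) w (dirVec (n - 1) (.inr ()))) := by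
  intro j hj p hp
  obtain rfl : j = 0 := by omega
  have hn0 : (n : ℝ) ≠ 0 := by exact_mod_cast hn
  exact (by simpa [hn0] using hw.boundary_relation hδ hwC (J := 0) (by omega) hp :
    iterDWithin (boxQ (n - 1) δ) (dirVec (n - 1) (.inr ())) 1 w p = 0)

lemma VanishesOnFace.sub_of_isHypMinimalGraph (hδ : 0 < δ) (hu : IsHypMinimalGraph n δ u)
    (hv : IsHypMinimalGraph n δ v) (huC : ContDiffOn ℝ (r + 2 : ℕ) u (boxQ (n - 1) δ))
    (hvC : ContDiffOn ℝ (r + 2 : ℕ) v (boxQ (n - 1) δ)) (hrn : r + 2 ≤ n)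
    (hbd : ∀ x' : Fin (n - 1) → ℝ, (∀ i, x' i ∈ Ioo (-δ) δ) → u (x', 0) = v (x', 0)) :
    VanishesOnFace (n - 1) δ (r + 3) fun p => u p - v p := by
  have hvy := hv.vanishesOnFace_dWithin hδ hvC (by omega)
  suffices ∀ J ≤ r + 2, VanishesOnFace (n - 1) δ (J + 1) fun p => u p - v p from this _ le_rfl
  intro J hJ
  induction J with
  | zero =>
    intro j hj p hp
    obtain rfl : j = 0 := by omega
    obtain ⟨x', y⟩ := p
    obtain ⟨hx', rfl : y = 0⟩ := hp
    exact sub_eq_zero.mpr (hbd x' hx')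
  | succ J ih =>
    exact VanishesOnFace.succ_of_isHypMinimalGraph hδ hu hv huC hvC hvy (by omega) (by omega)
      (ih (by omega))

end Main

theorem stmt_12_general (n m : ℕ) (hm2 : 2 ≤ m) (hmn : m ≤ n)
    (δ : ℝ) (hδ : 0 < δ)
    (u v : ((Fin (n - 1) → ℝ) × ℝ) → ℝ)
    (hu : ContDiffOn ℝ m u (boxQ (n - 1) δ))
    (hv : ContDiffOn ℝ m v (boxQ (n - 1) δ))
    (hueq : IsHypMinimalGraph n δ u)
    (hveq : IsHypMinimalGraph n δ v)
    (hbd : ∀ x' : Fin (n - 1) → ℝ, (∀ i, x' i ∈ Set.Ioo (-δ) δ) →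
      u (x', 0) = v (x', 0)) :
    ∀ x' : Fin (n - 1) → ℝ, (∀ i, x' i ∈ Set.Ioo (-δ) δ) →
      (∀ i : ℕ, i ≤ m →
        iteratedDerivWithin i (fun s => u (x', s)) (Set.Ico 0 δ) 0
          = iteratedDerivWithin i (fun s => v (x', s)) (Set.Ico 0 δ) 0)
      ∧ derivWithin (fun s => u (x', s)) (Set.Ico 0 δ) 0 = 0
      ∧ derivWithin (fun s => v (x', s)) (Set.Ico 0 δ) 0 = 0 := by
  obtain ⟨r, rfl⟩ : ∃ r, m = r + 2 := ⟨m - 2, by omega⟩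
  have hjet := VanishesOnFace.sub_of_isHypMinimalGraph hδ hueq hveq hu hv hmn hbd
  intro x' hx'
  have h0 : (0 : ℝ) ∈ Ico 0 δ := left_mem_Ico.mpr hδ
  have hface : ((x', 0) : (Fin (n - 1) → ℝ) × ℝ) ∈ boxFace (n - 1) δ := ⟨hx', rfl⟩
  have hderiv : ∀ {w}, IsHypMinimalGraph n δ w → ContDiffOn ℝ (r + 2 : ℕ) w (boxQ (n - 1) δ) →
      derivWithin (fun s => w (x', s)) (Ico 0 δ) 0 = 0 := by
    intro w hw hwC
    rw [← iteratedDerivWithin_one, iteratedDerivWithin_vertical_slice hδ hwC (by omega) hx' h0]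
    exact hw.vanishesOnFace_dWithin hδ hwC (by omega) 0 one_pos _ hface
  refine ⟨fun i hi => ?_, hderiv hueq hu, hderiv hveq hv⟩
  rw [iteratedDerivWithin_vertical_slice hδ hu hi hx' h0,
    iteratedDerivWithin_vertical_slice hδ hv hi hx' h0, ← sub_eq_zero]
  exact (iterDWithin_sub (uniqueDiffOn_boxQ hδ) (hu.of_le (by exact_mod_cast hi))
    (hv.of_le (by exact_mod_cast hi)) (boxFace_subset_boxQ hδ hface)).symm.trans
    (hjet i (by omega) _ hface)

/-- Two minimal-surface graphs in hyperbolic space, `C^m` up to the ideal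
boundary `{y = 0}` with the same boundary trace, have the same pure
`y`-derivatives at `y = 0` up to order `m`; in particular the first
`y`-derivative of each vanishes. -/
theorem stmt_12 (n m : ℕ) (hn : 2 ≤ n) (hm2 : 2 ≤ m) (hmn : m ≤ n)
    (δ : ℝ) (hδ : 0 < δ)
    (u v : ((Fin (n - 1) → ℝ) × ℝ) → ℝ)
    (hu : ContDiffOn ℝ m u (boxQ (n - 1) δ))
    (hv : ContDiffOn ℝ m v (boxQ (n - 1) δ))
    (hueq : IsHypMinimalGraph n δ u)
    (hveq : IsHypMinimalGraph n δ v)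
    (hbd : ∀ x' : Fin (n - 1) → ℝ, (∀ i, x' i ∈ Set.Ioo (-δ) δ) →
      u (x', 0) = v (x', 0)) :
    ∀ x' : Fin (n - 1) → ℝ, (∀ i, x' i ∈ Set.Ioo (-δ) δ) →
      (∀ i : ℕ, i ≤ m →
        iteratedDerivWithin i (fun s => u (x', s)) (Set.Ico 0 δ) 0
          = iteratedDerivWithin i (fun s => v (x', s)) (Set.Ico 0 δ) 0)
      ∧ derivWithin (fun s => u (x', s)) (Set.Ico 0 δ) 0 = 0
      ∧ derivWithin (fun s => v (x', s)) (Set.Ico 0 δ) 0 = 0 :=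
  stmt_12_general n m hm2 hmn δ hδ u v hu hv hueq hveq hbd
end
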